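/- arXiv:2402.03987 — 10 statements merged into one kernel-verified Lean document; each statement's English description precedes it below -/
import Mathlib

section
/- Let H = [h_1,...,h_{nt}] be a list of nt vectors in F₂^r and let 𝓗 be the n×2t array of vectors whose (i,j) entry for j ≤ t is h_{(i-1)t+j} and for j > t is h_{((i mod n))t + (2t - j + 1)} (i.e., row i's right half holds the reversed left-half columns of row i+1, cyclically). Then for any pattern p ∈ ℤ≥0^n with Σ p_i ≤ 2t and each p_i ≤ 2t, the multiset J(𝓗,p) = {{𝓗_{i,j} : p_i > 0 and j ≥ 2t - p_i + 1}} contains no entry of 𝓗 (as an indexed position among the nt base vectors) with multiplicity greater than 1. -/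
/-- Base index (0-indexed, among the `n*t` base vectors) of entry `(i,j)` of the
TE parity check array 𝓗 of Construction 1: for `j < t` (left half) it is
`h_{i*t+j}`, and for `j ≥ t` (right half) it is the reversed left half of the
(cyclically) next row, `h_{((i+1) mod n)*t + (2t-1-j)}`. -/
def baseIdx (n t : ℕ) (i : Fin n) (j : Fin (2 * t)) : ℕ :=
  if (j : ℕ) < t then (i : ℕ) * t + (j : ℕ)
  else (((i : ℕ) + 1) % n) * t + (2 * t - 1 - (j : ℕ))

lemma decomp_aux {t a b c d : ℕ} (ht : 0 < t) (hb : b < t) (hd : d < t)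
    (h : a * t + b = c * t + d) : a = c ∧ b = d := by
  have h1 : (a * t + b) % t = (c * t + d) % t := by rw [h]
  rw [Nat.mul_add_mod', Nat.mul_add_mod', Nat.mod_eq_of_lt hb, Nat.mod_eq_of_lt hd] at h1
  refine ⟨Nat.eq_of_mul_eq_mul_right ht (by omega), h1⟩

lemma succ_mod_eq {n a : ℕ} (ha : a < n) : (a + 1) % n = if a + 1 = n then 0 else a + 1 := by
  split
  · simp [*]
  · exact Nat.mod_eq_of_lt (by omega)

lemma succ_mod_ne {n a : ℕ} (hn : 2 ≤ n) (ha : a < n) : (a + 1) % n ≠ a := by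
  rw [succ_mod_eq ha]; split <;> omega

lemma succ_mod_inj {n a b : ℕ} (ha : a < n) (hb : b < n)
    (h : (a + 1) % n = (b + 1) % n) : a = b := by
  rw [succ_mod_eq ha, succ_mod_eq hb] at h
  split_ifs at h <;> omega

lemma pair_sum {n : ℕ} (p : Fin n → ℕ) {i i' : Fin n} (h : i ≠ i') :
    p i + p i' ≤ ∑ k, p k := by
  calc p i + p i' = ∑ k ∈ ({i, i'} : Finset (Fin n)), p k := (Finset.sum_pair h).symm
    _ ≤ ∑ k, p k := Finset.sum_le_sum_of_subset (Finset.subset_univ _)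

/-- for any pattern `p` with `∑ p_i ≤ 2t` and `p_i ≤ 2t`, the multiset
`J(𝓗,p)` of base indices of erased positions contains no base index with
multiplicity greater than one: distinct erased positions have distinct base indices. -/
theorem stmt_5 (n t r : ℕ) (hn : 3 ≤ n) (ht : 0 < t) (hr : 0 < r)
    (p : Fin n → ℕ) (hsum : ∑ i, p i ≤ 2 * t) (hmax : ∀ i, p i ≤ 2 * t) :
    ∀ (i i' : Fin n) (j j' : Fin (2 * t)),
      0 < p i → 2 * t - p i ≤ (j : ℕ) →
      0 < p i' → 2 * t - p i' ≤ (j' : ℕ) →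
      (i, j) ≠ (i', j') →
      baseIdx n t i j ≠ baseIdx n t i' j' := by
  intro i i' j j' hpi hji hpi' hji' hne heq
  have hjlt := j.isLt
  have hj'lt := j'.isLt
  simp only [baseIdx] at heq
  split_ifs at heq with hj hj' hj'
  · -- both left
    obtain ⟨h1, h2⟩ := decomp_aux ht hj hj' heq
    exact hne (by simp [Prod.ext_iff, Fin.ext_iff, h1, h2])
  · -- left / right
    obtain ⟨h1, h2⟩ := decomp_aux ht hj (show 2 * t - 1 - (j' : ℕ) < t by omega) heq
    have hii' : i ≠ i' := by
      intro h
      rw [h] at h1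
      exact succ_mod_ne (by omega) i'.isLt h1.symm
    have := pair_sum p hii'
    omega
  · -- right / left
    obtain ⟨h1, h2⟩ := decomp_aux ht (show 2 * t - 1 - (j : ℕ) < t by omega) hj' heq
    have hii' : i ≠ i' := by
      intro h
      rw [h] at h1
      exact succ_mod_ne (by omega) i'.isLt h1
    have := pair_sum p hii'
    omega
  · -- both right
    obtain ⟨h1, h2⟩ := decomp_aux ht (show 2 * t - 1 - (j : ℕ) < t by omega)
      (show 2 * t - 1 - (j' : ℕ) < t by omega) heq
    have := succ_mod_inj i.isLt i'.isLt h1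
    exact hne (by simp [Prod.ext_iff, Fin.ext_iff, this]; omega)
end

section
/- If C_B ⊆ F₂^{nt} is a linear code with minimum Hamming distance d = 2t+1 and parity check matrix H = [h_1,...,h_{nt}] of rank nt - k_B, then the TE code C_TE ⊆ F₂^{n×2t} defined by the TE parity check array 𝓗 (with 𝓗_{i,j} = h_{(i-1)t+j} for j ≤ t and 𝓗_{i,j} = h_{(i mod n)t + 2t - j + 1} for j > t) is a linear code of dimension k_B + nt and minimum ρ_TE-distance exactly d = 2t+1. -/
/-- Row-wise tail-erasure distance: 0 if rows equal, else `L - (least differing index)`,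
which equals `L - min{i : x_i ≠ y_i} + 1` in 1-indexed notation. -/
def rhoRow {L : ℕ} (x y : Fin L → ZMod 2) : ℕ :=
  if h : x = y then 0
  else
    L - (Finset.univ.filter (fun j => x j ≠ y j)).min' (by
      obtain ⟨j, hj⟩ := Function.ne_iff.mp h
      exact ⟨j, Finset.mem_filter.mpr ⟨Finset.mem_univ j, hj⟩⟩)

/-- The tail-erasure distance on binary `n × L` arrays: sum of row distances. -/
def rhoTE {n L : ℕ} (X Y : Fin n → Fin L → ZMod 2) : ℕ :=
  ∑ i, rhoRow (X i) (Y i)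

/-- The base index as an element of `Fin (n*t)` (the `% (n*t)` is a no-op since
`baseIdx < n*t`). -/
def baseIdxFin (n t : ℕ) (hnt : 0 < n * t) (i : Fin n) (j : Fin (2 * t)) : Fin (n * t) :=
  ⟨baseIdx n t i j % (n * t), Nat.mod_lt _ hnt⟩

/-!
Fold an array `X` into the word `foldTE X ∈ F₂^{nt}` whose entry at `h_k` is the sum of the two
entries of `X` that `𝓗` attaches to `h_k`: entry `r` of the left half of row `i` and the mirrored
entry `2t-1-r` of the right half of row `i-1`. Then `X ∈ C_TE` iff `foldTE X ∈ C_B`, and the fold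
together with the right halves of the rows is a bijection, so `|C_TE| = |C_B| · 2^{nt}`.

For `X ≠ Y` in `C_TE` with different folds, ρ_TE(X, Y) dominates the Hamming distance of the
folds, which is at least `2t+1`. With equal folds, some left-half entry `r` of a row `i` and the
matching right-half entry of row `i-1` both differ; they contribute `2t-r` and `r+1` to ρ_TE.
The array with ones in exactly two such positions is a codeword at ρ_TE-distance `2t+1` from `0`.
-/

open Finset

section Halves

variable {t : ℕ}

def leftHalf (r : Fin t) : Fin (2 * t) := ⟨r, by omega⟩

def rightHalf (r : Fin t) : Fin (2 * t) := (leftHalf r).rev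

@[simp] lemma val_leftHalf (r : Fin t) : (leftHalf r : ℕ) = r := rfl

@[simp] lemma val_rightHalf (r : Fin t) : (rightHalf r : ℕ) = 2 * t - 1 - r := by
  simp only [rightHalf, Fin.val_rev, val_leftHalf]
  omega

lemma leftHalf_ne_rightHalf (r s : Fin t) : leftHalf r ≠ rightHalf s := by
  intro h
  have := congrArg Fin.val h
  simp only [val_leftHalf, val_rightHalf] at this
  omega

@[simp] lemma leftHalf_inj {r s : Fin t} : leftHalf r = leftHalf s ↔ r = s := by
  simp [Fin.ext_iff]

@[simp] lemma rightHalf_inj {r s : Fin t} : rightHalf r = rightHalf s ↔ r = s := by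
  simp only [Fin.ext_iff, val_rightHalf]
  omega

variable (t) in
def halfEquiv : Fin t ⊕ Fin t ≃ Fin (2 * t) :=
  (Equiv.sumCongr (Equiv.refl _) Fin.revPerm).trans (finSumFinEquiv.trans (finCongr (two_mul t).symm))

@[simp] lemma halfEquiv_inl (r : Fin t) : halfEquiv t (.inl r) = leftHalf r := rfl

@[simp] lemma halfEquiv_inr (r : Fin t) : halfEquiv t (.inr r) = rightHalf r := by
  ext
  simp only [halfEquiv, Equiv.trans_apply, Equiv.sumCongr_apply, Equiv.coe_refl, Sum.map_inr,
    Fin.revPerm_apply, finSumFinEquiv_apply_right, Fin.natAdd_eq_addNat, finCongr_apply,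
    Fin.val_cast, Fin.val_addNat, Fin.val_rev, val_rightHalf]
  omega

@[simp] lemma halfEquiv_symm_leftHalf (r : Fin t) : (halfEquiv t).symm (leftHalf r) = .inl r := by
  rw [Equiv.symm_apply_eq, halfEquiv_inl]

@[simp] lemma halfEquiv_symm_rightHalf (r : Fin t) : (halfEquiv t).symm (rightHalf r) = .inr r := by
  rw [Equiv.symm_apply_eq, halfEquiv_inr]

lemma sum_fin_two_mul {M : Type*} [AddCommMonoid M] (f : Fin (2 * t) → M) :
    ∑ j, f j = ∑ r, (f (leftHalf r) + f (rightHalf r)) := by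
  rw [← (halfEquiv t).sum_comp, Fintype.sum_sum_type, sum_add_distrib]
  simp

end Halves

section Fold

variable {n t : ℕ}

lemma baseIdxFin_leftHalf (hnt : 0 < n * t) (i : Fin n) (r : Fin t) :
    baseIdxFin n t hnt i (leftHalf r) = finProdFinEquiv (i, r) := by
  ext
  have hr := r.2
  have hlt : (i : ℕ) * t + r < n * t := by nlinarith [i.2]
  simp only [baseIdxFin, baseIdx, val_leftHalf, hr, if_true, Nat.mod_eq_of_lt hlt,
    finProdFinEquiv_apply_val]
  ring

lemma baseIdxFin_rightHalf [NeZero n] (hnt : 0 < n * t) (i : Fin n) (r : Fin t) :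
    baseIdxFin n t hnt i (rightHalf r) = finProdFinEquiv (i + 1, r) := by
  ext
  have hr := r.2
  have hsucc : ((i + 1 : Fin n) : ℕ) = ((i : ℕ) + 1) % n := by
    rw [Fin.val_add, Fin.val_one', Nat.add_mod_mod]
  have hlt : ((i + 1 : Fin n) : ℕ) * t + r < n * t := by nlinarith [(i + 1 : Fin n).2]
  have hj : ¬ 2 * t - 1 - (r : ℕ) < t := by omega
  simp only [baseIdxFin, baseIdx, val_rightHalf, hj, if_false, finProdFinEquiv_apply_val]
  rw [show 2 * t - 1 - (2 * t - 1 - (r : ℕ)) = r by omega, ← hsucc, Nat.mod_eq_of_lt hlt]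
  ring

variable [NeZero n] {R : Type*}

def foldTE [Add R] (X : Fin n → Fin (2 * t) → R) : Fin (n * t) → R :=
  (fun p : Fin n × Fin t => X p.1 (leftHalf p.2) + X (p.1 - 1) (rightHalf p.2)) ∘
    finProdFinEquiv.symm

@[simp] lemma foldTE_finProdFinEquiv [Add R] (X : Fin n → Fin (2 * t) → R) (i : Fin n)
    (r : Fin t) :
    foldTE X (finProdFinEquiv (i, r)) = X i (leftHalf r) + X (i - 1) (rightHalf r) := by
  simp [foldTE]

lemma sum_sum_eq_sum_sum_fold {M : Type*} [AddCommMonoid M] (f : Fin n → Fin (2 * t) → M) :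
    ∑ i, ∑ j, f i j = ∑ i, ∑ r, (f i (leftHalf r) + f (i - 1) (rightHalf r)) := by
  simp only [sum_fin_two_mul, sum_add_distrib]
  congr 1
  exact ((Equiv.subRight 1).sum_comp fun i => ∑ r, f i (rightHalf r)).symm

lemma sum_smul_baseIdxFin_eq_sum_foldTE {M : Type*} [Semiring R] [AddCommMonoid M] [Module R M]
    (hnt : 0 < n * t) (h : Fin (n * t) → M) (X : Fin n → Fin (2 * t) → R) :
    ∑ i, ∑ j, X i j • h (baseIdxFin n t hnt i j) = ∑ k, foldTE X k • h k := by
  rw [sum_sum_eq_sum_sum_fold, ← finProdFinEquiv.sum_comp, Fintype.sum_prod_type]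
  simp [baseIdxFin_leftHalf, baseIdxFin_rightHalf, add_smul]

lemma hammingDist_foldTE_le [Add R] [DecidableEq R] (X Y : Fin n → Fin (2 * t) → R) :
    hammingDist (foldTE X) (foldTE Y) ≤ ∑ i, hammingDist (X i) (Y i) := by
  simp only [hammingDist, card_filter]
  rw [sum_sum_eq_sum_sum_fold, ← finProdFinEquiv.sum_comp, Fintype.sum_prod_type]
  refine sum_le_sum fun i _ => sum_le_sum fun r _ => ?_
  rw [foldTE_finProdFinEquiv, foldTE_finProdFinEquiv]
  split_ifs <;> simp_all

end Fold

section FoldEquiv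

variable {n t : ℕ} [NeZero n] {R : Type*} [AddGroup R]

def foldTEEquiv : (Fin n → Fin (2 * t) → R) ≃ (Fin (n * t) → R) × (Fin n → Fin t → R) where
  toFun X := (foldTE X, fun i r => X i (rightHalf r))
  invFun p i j := Sum.elim (fun r => p.1 (finProdFinEquiv (i, r)) - p.2 (i - 1) r) (p.2 i)
    ((halfEquiv t).symm j)
  left_inv X := by
    funext i j
    obtain ⟨r | r, rfl⟩ := (halfEquiv t).surjective j <;> simp
  right_inv p := by
    refine Prod.ext (funext fun k => ?_) (funext fun i => funext fun r => ?_)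
    · obtain ⟨⟨i, r⟩, rfl⟩ := finProdFinEquiv.surjective k
      simp
    · simp

lemma card_preimage_foldTE [Finite R] (S : Set (Fin (n * t) → R)) :
    Nat.card (foldTE ⁻¹' S) = Nat.card S * Nat.card R ^ (n * t) := by
  let e : foldTE ⁻¹' S ≃ S × (Fin n → Fin t → R) :=
    (foldTEEquiv.subtypeEquiv fun _ => Iff.rfl).trans Equiv.prodSubtypeFstEquivSubtypeProd
  rw [Nat.card_congr e, Nat.card_prod, Nat.card_fun, Nat.card_fun, Nat.card_fin, Nat.card_fin,
    ← pow_mul, mul_comm t]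

end FoldEquiv

section Rho

variable {L : ℕ}

@[simp] lemma rhoRow_self (x : Fin L → ZMod 2) : rhoRow x x = 0 := by
  simp [rhoRow]

lemma sub_le_rhoRow {x y : Fin L → ZMod 2} {j : Fin L} (hj : x j ≠ y j) : L - j ≤ rhoRow x y := by
  have hxy : x ≠ y := fun h => hj (congrFun h j)
  rw [rhoRow, dif_neg hxy]
  have := min'_le (univ.filter fun k => x k ≠ y k) j (by simpa using hj)
  omega

lemma hammingDist_le_rhoRow (x y : Fin L → ZMod 2) : hammingDist x y ≤ rhoRow x y := by
  by_cases hxy : x = y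
  · simp [hxy]
  rw [rhoRow, dif_neg hxy, ← Fin.card_Ici]
  exact card_le_card fun j hj => mem_Ici.mpr (min'_le _ j hj)

lemma rhoRow_single_zero (j : Fin L) : rhoRow (Pi.single j 1) 0 = L - j := by
  have hne : (Pi.single j 1 : Fin L → ZMod 2) ≠ 0 := by simp
  rw [rhoRow, dif_neg hne]
  congr
  refine le_antisymm (min'_le _ j (by simp)) (le_min' _ _ _ fun k hk => ?_)
  obtain rfl : k = j := by simpa [Pi.single_apply] using hk
  exact le_rfl

variable {n t : ℕ}

@[simp] lemma rhoTE_self (X : Fin n → Fin L → ZMod 2) : rhoTE X X = 0 := by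
  simp [rhoTE]

lemma hammingDist_foldTE_le_rhoTE [NeZero n] (X Y : Fin n → Fin (2 * t) → ZMod 2) :
    hammingDist (foldTE X) (foldTE Y) ≤ rhoTE X Y :=
  (hammingDist_foldTE_le X Y).trans (sum_le_sum fun _ _ => hammingDist_le_rhoRow _ _)

end Rho

section MinimumDistance

variable {n t : ℕ} [NeZero n]

lemma Fin.sub_one_ne_self (hn : 2 ≤ n) (i : Fin n) : i - 1 ≠ i := by
  simp only [ne_eq, sub_eq_self, Fin.one_eq_zero_iff]
  omega

lemma exists_ne_of_foldTE_eq {R : Type*} [Add R] [IsCancelAdd R] {X Y : Fin n → Fin (2 * t) → R}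
    (hXY : X ≠ Y) (hf : foldTE X = foldTE Y) :
    ∃ i r, X i (leftHalf r) ≠ Y i (leftHalf r) ∧
      X (i - 1) (rightHalf r) ≠ Y (i - 1) (rightHalf r) := by
  have hpair (i : Fin n) (r : Fin t) :
      X i (leftHalf r) = Y i (leftHalf r) ↔ X (i - 1) (rightHalf r) = Y (i - 1) (rightHalf r) := by
    have hk := congrFun hf (finProdFinEquiv (i, r))
    simp only [foldTE_finProdFinEquiv] at hk
    exact ⟨fun h => add_left_cancel (h ▸ hk), fun h => add_right_cancel (h ▸ hk)⟩
  obtain ⟨i, hi⟩ := Function.ne_iff.mp hXY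
  obtain ⟨j, hj⟩ := Function.ne_iff.mp hi
  obtain ⟨r | r, rfl⟩ := (halfEquiv t).surjective j <;>
    simp only [halfEquiv_inl, halfEquiv_inr] at hj
  · exact ⟨i, r, hj, by rwa [Ne, ← hpair]⟩
  · refine ⟨i + 1, r, ?_, by rwa [add_sub_cancel_right]⟩
    rwa [Ne, hpair, add_sub_cancel_right]

lemma two_mul_add_one_le_rhoTE_of_foldTE_eq (hn : 2 ≤ n) {X Y : Fin n → Fin (2 * t) → ZMod 2}
    (hXY : X ≠ Y) (hf : foldTE X = foldTE Y) : 2 * t + 1 ≤ rhoTE X Y := by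
  obtain ⟨i, r, hl, hr⟩ := exists_ne_of_foldTE_eq hXY hf
  have hrows := Fin.sub_one_ne_self hn i
  have hsub := sum_le_sum_of_subset (f := fun i => rhoRow (X i) (Y i)) (subset_univ {i - 1, i})
  rw [sum_pair hrows] at hsub
  have hl' := sub_le_rhoRow hl
  have hr' := sub_le_rhoRow hr
  simp only [val_leftHalf, val_rightHalf] at hl' hr'
  have := r.2
  unfold rhoTE
  omega

def foldKernelPair (i : Fin n) (r : Fin t) : Fin n → Fin (2 * t) → ZMod 2 :=
  Pi.single i (Pi.single (leftHalf r) 1) + Pi.single (i - 1) (Pi.single (rightHalf r) 1)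

lemma foldTE_foldKernelPair (i : Fin n) (r : Fin t) : foldTE (foldKernelPair i r) = 0 := by
  funext k
  obtain ⟨⟨i', r'⟩, rfl⟩ := finProdFinEquiv.surjective k
  simp only [foldKernelPair, foldTE_finProdFinEquiv, Pi.add_apply, Pi.single_apply, sub_left_inj,
    ite_apply, Pi.zero_apply, leftHalf_inj, rightHalf_inj, leftHalf_ne_rightHalf,
    (leftHalf_ne_rightHalf _ _).symm]
  split_ifs <;> simp_all [CharTwo.add_self_eq_zero]

lemma rhoTE_foldKernelPair_zero (hn : 2 ≤ n) (i : Fin n) (r : Fin t) :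
    rhoTE (foldKernelPair i r) 0 = 2 * t + 1 := by
  have hrows := Fin.sub_one_ne_self hn i
  have hrow (k : Fin n) : rhoRow (foldKernelPair i r k) 0 =
      (if k = i then 2 * t - r else 0) + (if k = i - 1 then (r : ℕ) + 1 else 0) := by
    by_cases hki : k = i
    · subst hki
      simp [foldKernelPair, hrows.symm, rhoRow_single_zero]
    by_cases hkj : k = i - 1
    · subst hkj
      simp only [foldKernelPair, Pi.add_apply, Pi.single_eq_same, Pi.single_eq_of_ne hrows,
        zero_add, rhoRow_single_zero, val_rightHalf, hrows, if_true, if_false]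
      omega
    · simp [foldKernelPair, hki, hkj]
  simp only [rhoTE, Pi.zero_apply, hrow, sum_add_distrib, sum_ite_eq', mem_univ, if_true]
  omega

end MinimumDistance

theorem stmt_6_general (n t kB : ℕ) (hn : 3 ≤ n) (ht : 1 ≤ t)
    (hnt : 0 < n * t)
    (h : Fin (n * t) → Fin (n * t - kB) → ZMod 2)
    (CB : Set (Fin (n * t) → ZMod 2))
    (hCBdef : CB = {x | ∑ k, x k • h k = 0})
    (hCBcard : Nat.card CB = 2 ^ kB)
    (hCBdist : ∀ x ∈ CB, ∀ y ∈ CB, x ≠ y → 2 * t + 1 ≤ hammingDist x y)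
    (CTE : Set (Fin n → Fin (2 * t) → ZMod 2))
    (hCTEdef : CTE = {X | ∑ i, ∑ j, X i j • h (baseIdxFin n t hnt i j) = 0}) :
    Nat.card CTE = 2 ^ (kB + n * t) ∧
    (∀ X ∈ CTE, ∀ Y ∈ CTE, X ≠ Y → 2 * t + 1 ≤ rhoTE X Y) ∧
    (∃ X ∈ CTE, ∃ Y ∈ CTE, X ≠ Y ∧ rhoTE X Y = 2 * t + 1) := by
  have : NeZero n := ⟨by omega⟩
  have hCTE : CTE = foldTE ⁻¹' CB := by
    ext X
    simp only [hCTEdef, hCBdef, Set.mem_ofPred_eq, Set.mem_preimage,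
      sum_smul_baseIdxFin_eq_sum_foldTE]
  have hzero : (0 : Fin (n * t) → ZMod 2) ∈ CB := by simp [hCBdef]
  refine ⟨?_, fun X hX Y hY hXY => ?_, ?_⟩
  · rw [hCTE, card_preimage_foldTE, hCBcard, Nat.card_zmod, pow_add]
  · by_cases hf : foldTE X = foldTE Y
    · exact two_mul_add_one_le_rhoTE_of_foldTE_eq (by omega) hXY hf
    rw [hCTE] at hX hY
    exact (hCBdist _ hX _ hY hf).trans (hammingDist_foldTE_le_rhoTE X Y)
  · have hdist := rhoTE_foldKernelPair_zero (by omega) (0 : Fin n) ⟨0, ht⟩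
    refine ⟨foldKernelPair 0 ⟨0, ht⟩, ?_, 0, ?_, fun h0 => ?_, hdist⟩
    · rw [hCTE, Set.mem_preimage, foldTE_foldKernelPair]
      exact hzero
    · simp [hCTEdef]
    · rw [h0, rhoTE_self] at hdist
      omega

/-- if `C_B ⊆ F₂^{nt}` is linear of dimension `k_B` (i.e. size `2^{k_B}`)
with minimum Hamming distance exactly `d = 2t+1` and parity check matrix with columns
`h_1,…,h_{nt}`, then the code `C_TE ⊆ F₂^{n×2t}` cut out by the TE parity check array 𝓗
has dimension `k_B + nt` (size `2^{k_B+nt}`) and minimum ρ_TE-distance exactly `2t+1`. -/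
theorem stmt_6 (n t kB : ℕ) (hn : 3 ≤ n) (ht : 1 ≤ t) (hk : kB ≤ n * t)
    (hnt : 0 < n * t)
    (h : Fin (n * t) → Fin (n * t - kB) → ZMod 2)
    (CB : Set (Fin (n * t) → ZMod 2))
    (hCBdef : CB = {x | ∑ k, x k • h k = 0})
    (hCBcard : Nat.card CB = 2 ^ kB)
    (hCBdist : ∀ x ∈ CB, ∀ y ∈ CB, x ≠ y → 2 * t + 1 ≤ hammingDist x y)
    (hCBdist' : ∃ x ∈ CB, ∃ y ∈ CB, x ≠ y ∧ hammingDist x y = 2 * t + 1)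
    (CTE : Set (Fin n → Fin (2 * t) → ZMod 2))
    (hCTEdef : CTE = {X | ∑ i, ∑ j, X i j • h (baseIdxFin n t hnt i j) = 0}) :
    Nat.card CTE = 2 ^ (kB + n * t) ∧
    (∀ X ∈ CTE, ∀ Y ∈ CTE, X ≠ Y → 2 * t + 1 ≤ rhoTE X Y) ∧
    (∃ X ∈ CTE, ∃ Y ∈ CTE, X ≠ Y ∧ rhoTE X Y = 2 * t + 1) :=
  stmt_6_general n t kB hn ht hnt h CB hCBdef hCBcard hCBdist CTE hCTEdef
end

section
/- Let 𝓗 be a TE parity check array of a linear code C ⊆ F₂^{n×L} with entries h_{i,j} ∈ F₂^r. Then the minimum ρ_TE-distance of C is the largest integer d such that for every pattern p ∈ ℤ≥0^n with ||p||₁ ≤ d-1 and each p_i ≤ L, the multiset J(𝓗,p) = {{h_{i,j} : p_i > 0, j ≥ L - p_i + 1}} is linearly independent over F₂. -/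
/-- The multiset `J(𝓗,p) = {{h_{i,j} : p_i > 0, j ≥ L - p_i + 1}}` (0-indexed:
`j ≥ L - p_i`) is linearly independent over F₂: any F₂-combination of the erased
positions' vectors summing to zero has all coefficients zero. -/
def indepPattern {n L r : ℕ} (h : Fin n → Fin L → Fin r → ZMod 2) (p : Fin n → ℕ) : Prop :=
  ∀ c : Fin n → Fin L → ZMod 2,
    (∀ i j, c i j ≠ 0 → L - p i ≤ (j : ℕ)) →
    (∑ i, ∑ j, c i j • h i j) = 0 → c = 0

lemma rhoRow_spec' {L : ℕ} (x y : Fin L → ZMod 2) (hxy : x ≠ y) :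
    ∃ m : Fin L, x m ≠ y m ∧ (∀ j, x j ≠ y j → m ≤ j) ∧ rhoRow x y = L - (m : ℕ) := by
  classical
  set s := Finset.univ.filter (fun j => x j ≠ y j) with hs
  have hne : s.Nonempty := by
    obtain ⟨j, hj⟩ := Function.ne_iff.mp hxy
    exact ⟨j, by simp [hs, hj]⟩
  refine ⟨s.min' hne, ?_, ?_, ?_⟩
  · have := s.min'_mem hne
    simpa [hs] using this
  · intro j hj
    exact s.min'_le j (by simp [hs, hj])
  · unfold rhoRow
    rw [dif_neg hxy]

lemma rhoRow_le {L : ℕ} (x y : Fin L → ZMod 2) : rhoRow x y ≤ L := by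
  unfold rhoRow
  split
  · exact Nat.zero_le _
  · exact Nat.sub_le _ _

lemma rhoRow_pos {L : ℕ} (x y : Fin L → ZMod 2) (hxy : x ≠ y) : 1 ≤ rhoRow x y := by
  obtain ⟨m, _, _, hr⟩ := rhoRow_spec' x y hxy
  have := m.isLt
  omega

lemma rhoRow_sub {L : ℕ} (x y : Fin L → ZMod 2) : rhoRow x y = rhoRow (x - y) 0 := by
  by_cases hxy : x = y
  · subst hxy
    simp [rhoRow]
  · have h2 : x - y ≠ 0 := sub_ne_zero.mpr hxy
    obtain ⟨m, hm, hmin, hr⟩ := rhoRow_spec' x y hxy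
    obtain ⟨m', hm', hmin', hr'⟩ := rhoRow_spec' (x - y) 0 h2
    have hmm : m = m' := by
      apply le_antisymm
      · exact hmin m' (by simpa [sub_ne_zero] using hm')
      · exact hmin' m (by simpa [sub_ne_zero] using hm)
    rw [hr, hr', hmm]

lemma rhoRow_le_pattern {L : ℕ} (z : Fin L → ZMod 2) (p : ℕ) (hpL : p ≤ L)
    (hsupp : ∀ j : Fin L, z j ≠ 0 → L - p ≤ (j : ℕ)) : rhoRow z 0 ≤ p := by
  by_cases hz : z = 0
  · subst hz; simp [rhoRow]
  · obtain ⟨m, hm, _, hr⟩ := rhoRow_spec' z 0 hz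
    have : L - p ≤ (m : ℕ) := hsupp m (by simpa using hm)
    omega

lemma rhoRow_support {L : ℕ} (z : Fin L → ZMod 2) (j : Fin L) (hj : z j ≠ 0) :
    L - rhoRow z 0 ≤ (j : ℕ) := by
  have hz : z ≠ 0 := fun hz => hj (by rw [hz]; rfl)
  obtain ⟨m, hm, hmin, hr⟩ := rhoRow_spec' z 0 hz
  have h1 : m ≤ j := hmin j (by simpa using hj)
  have hlt := m.isLt
  have h2 : (m : ℕ) ≤ (j : ℕ) := h1
  omega

lemma sub_memC {n L r : ℕ} (h : Fin n → Fin L → Fin r → ZMod 2)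
    (X Y : Fin n → Fin L → ZMod 2)
    (hX : ∑ i, ∑ j, X i j • h i j = 0) (hY : ∑ i, ∑ j, Y i j • h i j = 0) :
    ∑ i, ∑ j, (X - Y) i j • h i j = 0 := by
  simp only [Pi.sub_apply, sub_smul, Finset.sum_sub_distrib, hX, hY, sub_zero]

/-- the minimum ρ_TE-distance of the linear code with TE parity check
array 𝓗 is the largest integer `d` such that for every pattern `p` with `‖p‖₁ ≤ d-1`
and `p_i ≤ L`, the multiset `J(𝓗,p)` is linearly independent. -/
theorem stmt_7 (n L r : ℕ) (hn : 0 < n) (hL : 0 < L) (hr : 0 < r)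
    (h : Fin n → Fin L → Fin r → ZMod 2)
    (C : Set (Fin n → Fin L → ZMod 2))
    (hCdef : C = {X | ∑ i, ∑ j, X i j • h i j = 0})
    (hCnz : ∃ X ∈ C, X ≠ 0) :
    IsGreatest
      {d : ℕ | ∀ p : Fin n → ℕ, (∀ i, p i ≤ L) → (∑ i, p i) ≤ d - 1 → indepPattern h p}
      (sInf {k : ℕ | ∃ X ∈ C, ∃ Y ∈ C, X ≠ Y ∧ rhoTE X Y = k}) := by
  classical
  have hzeroC : (0 : Fin n → Fin L → ZMod 2) ∈ C := by
    rw [hCdef]; simp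
  obtain ⟨X0, hX0, hX0ne⟩ := hCnz
  set W := {k : ℕ | ∃ X ∈ C, ∃ Y ∈ C, X ≠ Y ∧ rhoTE X Y = k} with hWdef
  have hWne : W.Nonempty := ⟨rhoTE X0 0, X0, hX0, 0, hzeroC, hX0ne, rfl⟩
  have hone : ∀ k ∈ W, 1 ≤ k := by
    rintro k ⟨X, hX, Y, hY, hne, rfl⟩
    obtain ⟨i, hi⟩ := Function.ne_iff.mp hne
    have h1 : 1 ≤ rhoRow (X i) (Y i) := rhoRow_pos _ _ hi
    have h2 : rhoRow (X i) (Y i) ≤ rhoTE X Y :=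
      Finset.single_le_sum (f := fun i => rhoRow (X i) (Y i))
        (fun _ _ => Nat.zero_le _) (Finset.mem_univ i)
    omega
  have hmemW : sInf W ∈ W := Nat.sInf_mem hWne
  have hDpos : 1 ≤ sInf W := hone _ hmemW
  constructor
  · -- sInf W belongs to the "independence" set
    intro p hpL hpsum c hsupp hsum
    by_contra hc
    have hcC : c ∈ C := by rw [hCdef]; exact hsum
    have hk : rhoTE c 0 ∈ W := ⟨c, hcC, 0, hzeroC, hc, rfl⟩
    have h1 : sInf W ≤ rhoTE c 0 := Nat.sInf_le hk
    have h2 : rhoTE c 0 ≤ ∑ i, p i := by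
      unfold rhoTE
      exact Finset.sum_le_sum fun i _ =>
        rhoRow_le_pattern (c i) (p i) (hpL i) (fun j hj => hsupp i j hj)
    omega
  · -- upper bound
    intro d' hd'
    obtain ⟨X, hX, Y, hY, hXY, hk⟩ := hmemW
    set Z := X - Y with hZdef
    have hXC : ∑ i, ∑ j, X i j • h i j = 0 := by rw [hCdef] at hX; exact hX
    have hYC : ∑ i, ∑ j, Y i j • h i j = 0 := by rw [hCdef] at hY; exact hY
    have hZC : ∑ i, ∑ j, Z i j • h i j = 0 := sub_memC h X Y hXC hYC
    have hZne : Z ≠ 0 := sub_ne_zero.mpr hXY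
    have hkZ : rhoTE X Y = ∑ i, rhoRow (Z i) 0 := by
      unfold rhoTE
      exact Finset.sum_congr rfl fun i _ => rhoRow_sub (X i) (Y i)
    by_contra hlt
    push_neg at hlt
    have hindep : indepPattern h (fun i => rhoRow (Z i) 0) :=
      hd' (fun i => rhoRow (Z i) 0) (fun i => rhoRow_le _ _)
        (by rw [← hkZ, hk]; omega)
    exact hZne (hindep Z (fun i j hij => rhoRow_support (Z i) j hij) hZC)
end

section
/- Any (d-1)-tail-erasure correcting code C ⊆ F₂^{n×(d-1)} satisfies |C| ≤ A(n,d) · 2^{n(d-2)}, where A(n,d) is the maximal size of a binary code of length n with minimum Hamming distance d. -/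
/-- `A(n,d)`: the maximal size of a binary code of length `n` with minimum
Hamming distance `d`. -/
noncomputable def maxHammingCode (n d : ℕ) : ℕ :=
  sSup {m : ℕ | ∃ S : Finset (Fin n → ZMod 2),
    (∀ x ∈ S, ∀ y ∈ S, x ≠ y → d ≤ hammingDist x y) ∧ S.card = m}

/-- any (d-1)-tail-erasure correcting code `C ⊆ F₂^{n×(d-1)}`
(minimum ρ_TE-distance ≥ d) satisfies `|C| ≤ A(n,d) · 2^{n(d-2)}`. -/
theorem stmt_8 (n d : ℕ) (hn : 1 ≤ n) (hd : 2 ≤ d)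
    (C : Finset (Fin n → Fin (d - 1) → ZMod 2))
    (hC : ∀ X ∈ C, ∀ Y ∈ C, X ≠ Y → d ≤ rhoTE X Y) :
    C.card ≤ maxHammingCode n d * 2 ^ (n * (d - 2)) := by
  classical
  have hd2 : d - 2 < d - 1 := by omega
  set last : Fin (d-1) := ⟨d-2, hd2⟩ with hlast
  set f : (Fin n → Fin (d-1) → ZMod 2) → (Fin n → Fin (d-2) → ZMod 2) :=
    fun X i j => X i (Fin.castLE (by omega) j) with hf
  set g : (Fin n → Fin (d-1) → ZMod 2) → (Fin n → ZMod 2) :=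
    fun X i => X i last with hg
  -- any index where two "prefix-equal" codewords differ must be `last`
  have honly : ∀ X Y : (Fin n → Fin (d-1) → ZMod 2), f X = f Y →
      ∀ i (j : Fin (d-1)), X i j ≠ Y i j → j = last := by
    intro X Y hfp i j hne
    by_contra hj
    have hjv : j.val < d - 2 := by
      have := j.isLt
      rcases Nat.lt_or_ge j.val (d-2) with h | h
      · exact h
      · refine absurd ?_ hj
        apply Fin.ext
        simp only [hlast]
        omega
    have := congrFun (congrFun hfp i) ⟨j.val, hjv⟩
    simp only [hf] at this
    have hcast : (Fin.castLE (by omega : d - 2 ≤ d - 1) (⟨j.val, hjv⟩ : Fin (d-2))) = j := by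
      ext; rfl
    rw [hcast] at this
    exact hne this
  have key : ∀ p, (C.filter fun X => f X = p).card ≤ maxHammingCode n d := by
    intro p
    set S := C.filter fun X => f X = p with hS
    have hSsub : ∀ X ∈ S, X ∈ C ∧ f X = p := by
      intro X hX; exact Finset.mem_filter.mp hX
    have hinj : Set.InjOn g S := by
      intro X hX Y hY hXY
      obtain ⟨_, hXp⟩ := hSsub X hX
      obtain ⟨_, hYp⟩ := hSsub Y hY
      funext i j
      by_contra hne
      have hj := honly X Y (hXp.trans hYp.symm) i j hne
      subst hj
      exact hne (congrFun hXY i)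
    -- distance bound for the images
    have hdist : ∀ x ∈ S.image g, ∀ y ∈ S.image g, x ≠ y → d ≤ hammingDist x y := by
      intro x hx y hy hxy
      obtain ⟨X, hX, rfl⟩ := Finset.mem_image.mp hx
      obtain ⟨Y, hY, rfl⟩ := Finset.mem_image.mp hy
      have hXY : X ≠ Y := fun h => hxy (by rw [h])
      obtain ⟨hXC, hXp⟩ := hSsub X hX
      obtain ⟨hYC, hYp⟩ := hSsub Y hY
      have hfp : f X = f Y := hXp.trans hYp.symm
      have hle : rhoTE X Y ≤ hammingDist (g X) (g Y) := by
        rw [hammingDist, rhoTE, Finset.card_eq_sum_ones, Finset.sum_filter]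
        apply Finset.sum_le_sum
        intro i _
        by_cases hrow : X i = Y i
        · simp [rhoRow, hrow]
        · have hlastne : X i last ≠ Y i last := by
            obtain ⟨j, hj⟩ := Function.ne_iff.mp hrow
            have := honly X Y hfp i j hj
            rwa [this] at hj
          have hif : (if g X i ≠ g Y i then 1 else 0) = 1 := by
            simp [hg, hlastne]
          rw [hif, rhoRow, dif_neg hrow]
          have hmin : (Finset.univ.filter (fun j => X i j ≠ Y i j)).min'
              (by
                obtain ⟨j, hj⟩ := Function.ne_iff.mp hrow
                exact ⟨j, Finset.mem_filter.mpr ⟨Finset.mem_univ j, hj⟩⟩) = last := by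
            apply honly X Y hfp i
            have := Finset.min'_mem (Finset.univ.filter (fun j => X i j ≠ Y i j))
              (by
                obtain ⟨j, hj⟩ := Function.ne_iff.mp hrow
                exact ⟨j, Finset.mem_filter.mpr ⟨Finset.mem_univ j, hj⟩⟩)
            exact (Finset.mem_filter.mp this).2
          rw [hmin]
          simp only [hlast]
          omega
      exact le_trans (hC X hXC Y hYC hXY) hle
    have hbdd : BddAbove {m : ℕ | ∃ T : Finset (Fin n → ZMod 2),
        (∀ x ∈ T, ∀ y ∈ T, x ≠ y → d ≤ hammingDist x y) ∧ T.card = m} := by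
      refine ⟨2 ^ n, ?_⟩
      rintro m ⟨T, _, rfl⟩
      calc T.card ≤ Fintype.card (Fin n → ZMod 2) := Finset.card_le_univ T
        _ = 2 ^ n := by simp [Fintype.card_fun]
    have hmem : (S.image g).card ∈ {m : ℕ | ∃ T : Finset (Fin n → ZMod 2),
        (∀ x ∈ T, ∀ y ∈ T, x ≠ y → d ≤ hammingDist x y) ∧ T.card = m} :=
      ⟨S.image g, hdist, rfl⟩
    calc S.card = (S.image g).card := (Finset.card_image_of_injOn hinj).symm
      _ ≤ maxHammingCode n d := le_csSup hbdd hmem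
  have hmain := Finset.card_le_mul_card_image_of_maps_to
    (fun X (_ : X ∈ C) => Finset.mem_univ (f X)) (maxHammingCode n d)
    (fun p _ => key p)
  have hcard : (Finset.univ : Finset (Fin n → Fin (d-2) → ZMod 2)).card = 2 ^ (n * (d-2)) := by
    simp [Finset.card_univ, Fintype.card_fun]
    rw [← pow_mul, Nat.mul_comm]
  rw [hcard] at hmain
  exact hmain
end

section
/- For r ≤ L, the number of arrays Y ∈ F₂^{n×L} with ρ_TE(X,Y) ≤ r (for any fixed X) equals 1 + Σ_{k=1}^r Σ_{i=1}^k C(n,i)·C(k-1,i-1)·2^{k-i}; in particular this value does not depend on X. -/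
open Finset PowerSeries

section WeightEnumerator

variable {α R : Type*} [Fintype α] [CommSemiring R]

noncomputable def weightEnumerator (w : α → ℕ) : R⟦X⟧ := ∑ a, X ^ w a

lemma coeff_weightEnumerator (w : α → ℕ) (k : ℕ) :
    coeff k (weightEnumerator w : R⟦X⟧) = #{a | w a = k} := by
  simp [weightEnumerator, coeff_X_pow, eq_comm]

lemma weightEnumerator_pow (w : α → ℕ) (n : ℕ) :
    (weightEnumerator w : R⟦X⟧) ^ n = weightEnumerator fun D : Fin n → α => ∑ i, w (D i) := by
  rw [weightEnumerator, ← Fin.prod_const, prod_univ_sum]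
  simp_rw [prod_pow_eq_pow_sum]
  rfl

end WeightEnumerator

lemma coeff_pow_eq_of_coeff_eq {R : Type*} [CommSemiring R] {f g : R⟦X⟧} {L : ℕ}
    (h : ∀ m ≤ L, coeff m f = coeff m g) (n : ℕ) {k : ℕ} (hk : k ≤ L) :
    coeff k (f ^ n) = coeff k (g ^ n) := by
  have htrunc : trunc (L + 1) f = trunc (L + 1) g := by
    ext m
    simp only [coeff_trunc, Nat.lt_succ_iff]
    split_ifs with hm
    exacts [h m hm, rfl]
  have hk' : k < L + 1 := Nat.lt_succ_of_le hk
  calc coeff k (f ^ n) = (trunc (L + 1) (f ^ n)).coeff k := by rw [coeff_trunc, if_pos hk']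
    _ = (trunc (L + 1) ((trunc (L + 1) f : R⟦X⟧) ^ n)).coeff k := by rw [trunc_trunc_pow]
    _ = (trunc (L + 1) ((trunc (L + 1) g : R⟦X⟧) ^ n)).coeff k := by rw [htrunc]
    _ = coeff k (g ^ n) := by rw [trunc_trunc_pow, coeff_trunc, if_pos hk']

section TailErasureRowSeries

variable (R : Type*) [CommRing R]

/-- `1 + X/(1 - 2X)`: up to degree `L`, the weight enumerator of a row of length `L`. -/
noncomputable def tailErasureRowSeries : R⟦X⟧ := 1 + X * rescale 2 (mk 1)

variable {R}

lemma coeff_tailErasureRowSeries (m : ℕ) :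
    coeff m (tailErasureRowSeries R) = if m = 0 then 1 else 2 ^ (m - 1) := by
  rcases m with _ | m
  · simp [tailErasureRowSeries]
  · simp [tailErasureRowSeries, coeff_succ_X_mul, coeff_one]

lemma constantCoeff_tailErasureRowSeries : constantCoeff (tailErasureRowSeries R) = 1 := by
  simp [tailErasureRowSeries]

lemma coeff_succ_X_mul_rescale_two_mk_one_pow_succ (j k : ℕ) :
    coeff (k + 1) ((X * rescale (2 : R) (mk 1)) ^ (j + 1)) = (k.choose j * 2 ^ (k - j) : R) := by
  rw [mul_pow, ← map_pow, mk_one_pow_eq_mk_choose_add, coeff_X_pow_mul', coeff_rescale, coeff_mk]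
  split_ifs with hjk
  · rw [show j + (k + 1 - (j + 1)) = k by omega, show k + 1 - (j + 1) = k - j by omega, mul_comm]
  · simp [Nat.choose_eq_zero_of_lt (show k < j by omega)]

lemma coeff_tailErasureRowSeries_pow {k : ℕ} (hk : 0 < k) (n : ℕ) :
    coeff k (tailErasureRowSeries R ^ n) =
      ∑ i ∈ Icc 1 k, (n.choose i * (k - 1).choose (i - 1) * 2 ^ (k - i) : ℕ) := by
  obtain ⟨k, rfl⟩ : ∃ k', k = k' + 1 := ⟨k - 1, by omega⟩
  set t : ℕ → ℕ := fun i => n.choose (i + 1) * k.choose i * 2 ^ (k - i)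
  have hcoeff : coeff (k + 1) (tailErasureRowSeries R ^ n) = ∑ i ∈ range n, (t i : R) := by
    rw [tailErasureRowSeries, add_comm (1 : R⟦X⟧), add_pow, map_sum, sum_range_succ']
    simp only [one_pow, mul_one, pow_zero, ← map_natCast (C (R := R)), coeff_mul_C,
      coeff_succ_X_mul_rescale_two_mk_one_pow_succ, coeff_one, t]
    push_cast
    simpa using sum_congr rfl fun i _ => by ring
  have hsum : ∑ i ∈ Icc 1 (k + 1), n.choose i * k.choose (i - 1) * 2 ^ (k + 1 - i) =
      ∑ i ∈ range (k + 1), t i := by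
    rw [← Ico_add_one_right_eq_Icc, sum_Ico_eq_sum_range]
    simp [t, add_comm]
  have htail : ∀ m ≥ min n (k + 1), ∑ i ∈ range m, t i = ∑ i ∈ range (min n (k + 1)), t i := by
    refine fun m hm => (sum_subset (range_subset_range.2 hm) fun i _ hi => ?_).symm
    rcases min_le_iff.1 (not_lt.1 (mem_range.not.1 hi)) with hni | hki
    · simp [t, Nat.choose_eq_zero_of_lt (Nat.lt_succ_of_le hni)]
    · simp [t, Nat.choose_eq_zero_of_lt (Nat.lt_of_succ_le hki)]
  rw [hcoeff, Nat.add_sub_cancel, hsum, ← Nat.cast_sum, htail n (min_le_left _ _),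
    htail (k + 1) (min_le_right _ _)]

end TailErasureRowSeries

lemma rhoRow_eq_rhoRow_zero_sub {L : ℕ} (x y : Fin L → ZMod 2) :
    rhoRow x y = rhoRow 0 (y - x) := by
  have hsupp : ∀ j, x j ≠ y j ↔ (0 : Fin L → ZMod 2) j ≠ (y - x) j := fun j => by
    simp [sub_eq_zero, eq_comm]
  unfold rhoRow
  by_cases h : x = y
  · simp [h]
  · rw [dif_neg h, dif_neg (by simpa [eq_comm, sub_eq_zero] using h)]
    simp_rw [hsupp]

lemma rhoTE_eq_rhoTE_zero_sub {n L : ℕ} (X Y : Fin n → Fin L → ZMod 2) :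
    rhoTE X Y = rhoTE 0 (Y - X) :=
  sum_congr rfl fun i _ => rhoRow_eq_rhoRow_zero_sub (X i) (Y i)

lemma rhoRow_zero_le_iff {L m : ℕ} (d : Fin L → ZMod 2) :
    rhoRow 0 d ≤ m ↔ ∀ j : Fin L, (j : ℕ) < L - m → d j = 0 := by
  unfold rhoRow
  split_ifs with h
  · simp [← h]
  · set S := univ.filter fun j => (0 : Fin L → ZMod 2) j ≠ d j
    have hS : ∀ j, j ∈ S ↔ d j ≠ 0 := fun j => by simp [S, eq_comm]
    rw [tsub_le_iff_tsub_le]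
    constructor
    · intro hmin j hj
      by_contra hdj
      exact absurd hj (not_lt.2 (hmin.trans (S.min'_le j ((hS j).2 hdj))))
    · intro hzero
      by_contra! hlt
      exact (hS _).1 (S.min'_mem _) (hzero _ hlt)

lemma card_rhoRow_zero_le {L m : ℕ} (hm : m ≤ L) :
    #{d : Fin L → ZMod 2 | rhoRow 0 d ≤ m} = 2 ^ m := by
  have hball : ({d : Fin L → ZMod 2 | rhoRow 0 d ≤ m} : Finset _) =
      Fintype.piFinset fun j : Fin L => if (j : ℕ) < L - m then {0} else univ := by
    ext d
    simp only [mem_filter, mem_univ, true_and, Fintype.mem_piFinset, rhoRow_zero_le_iff]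
    refine forall_congr' fun j => ?_
    split_ifs <;> simp [*]
  obtain ⟨a, rfl⟩ := Nat.exists_eq_add_of_le' hm
  rw [hball, Fintype.card_piFinset, Fin.prod_univ_eq_prod_range
    (fun j => #(if j < a + m - m then {0} else (univ : Finset (ZMod 2)))), prod_range_add]
  simp +contextual

lemma card_rhoRow_zero_eq {R : Type*} [CommRing R] {L m : ℕ} (hm : m ≤ L) :
    (#{d : Fin L → ZMod 2 | rhoRow 0 d = m} : R) = coeff m (tailErasureRowSeries R) := by
  rw [coeff_tailErasureRowSeries]
  rcases m with _ | m
  · have hzero := card_rhoRow_zero_le (m := 0) (Nat.zero_le L)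
    simp only [Nat.le_zero, pow_zero] at hzero
    simp [hzero]
  · have hshell : ({d : Fin L → ZMod 2 | rhoRow 0 d = m + 1} : Finset _) =
        (univ.filter fun d : Fin L → ZMod 2 => rhoRow 0 d ≤ m + 1) \
          univ.filter fun d => rhoRow 0 d ≤ m := by
      ext d
      simp only [mem_sdiff, mem_filter, mem_univ, true_and]
      omega
    rw [hshell, card_sdiff_of_subset (monotone_filter_right _ fun _ _ h => h.trans m.le_succ),
      card_rhoRow_zero_le hm, card_rhoRow_zero_le (by omega), pow_succ, Nat.mul_two,
      Nat.add_sub_cancel]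
    simp

lemma card_rhoTE_zero_eq {R : Type*} [CommRing R] {n L k : ℕ} (hk : k ≤ L) :
    (#{D : Fin n → Fin L → ZMod 2 | rhoTE 0 D = k} : R) =
      coeff k (tailErasureRowSeries R ^ n) := by
  calc (#{D : Fin n → Fin L → ZMod 2 | rhoTE 0 D = k} : R)
      = coeff k (weightEnumerator (rhoRow (0 : Fin L → ZMod 2)) ^ n) := by
        rw [weightEnumerator_pow, coeff_weightEnumerator]
        rfl
    _ = coeff k (tailErasureRowSeries R ^ n) := coeff_pow_eq_of_coeff_eq (fun m hm => by
        rw [coeff_weightEnumerator, card_rhoRow_zero_eq hm]) n hk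

lemma card_rhoTE_le_eq {R : Type*} [CommRing R] {n L r : ℕ} (hr : r ≤ L)
    (X : Fin n → Fin L → ZMod 2) :
    (Nat.card {Y : Fin n → Fin L → ZMod 2 | rhoTE X Y ≤ r} : R) =
      ∑ k ∈ range (r + 1), coeff k (tailErasureRowSeries R ^ n) := by
  have htranslate : Nat.card {Y : Fin n → Fin L → ZMod 2 | rhoTE X Y ≤ r} =
      #{D : Fin n → Fin L → ZMod 2 | rhoTE 0 D ≤ r} := by
    rw [← Fintype.card_subtype, ← Nat.card_eq_fintype_card]
    exact Nat.card_congr ((Equiv.subRight X).subtypeEquiv fun Y => by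
      simp [rhoTE_eq_rhoTE_zero_sub X Y])
  rw [htranslate, card_eq_sum_card_fiberwise (t := range (r + 1)) (f := rhoTE 0)
    fun D hD => mem_range.2 (Nat.lt_succ_of_le (mem_filter.1 hD).2)]
  push_cast
  refine sum_congr rfl fun k hk => ?_
  have hkr : k ≤ r := Nat.le_of_lt_succ (mem_range.1 hk)
  rw [filter_filter, filter_congr fun D _ => and_iff_right_of_imp fun h => h ▸ hkr,
    card_rhoTE_zero_eq (hkr.trans hr)]

theorem stmt_9_general (n L r : ℕ) (hrL : r ≤ L)
    (X : Fin n → Fin L → ZMod 2) :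
    Nat.card {Y : Fin n → Fin L → ZMod 2 | rhoTE X Y ≤ r} =
      1 + ∑ k ∈ Finset.Icc 1 r, ∑ i ∈ Finset.Icc 1 k,
        n.choose i * (k - 1).choose (i - 1) * 2 ^ (k - i) := by
  have hball := card_rhoTE_le_eq (R := ℤ) hrL X
  rw [Nat.range_succ_eq_Icc_zero, ← insert_Icc_add_one_left_eq_Icc (Nat.zero_le r),
    sum_insert (by simp), coeff_zero_eq_constantCoeff_apply, map_pow,
    constantCoeff_tailErasureRowSeries, one_pow,
    sum_congr rfl fun k hk => coeff_tailErasureRowSeries_pow (mem_Icc.1 hk).1 n] at hball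
  exact_mod_cast hball

/-- for `r ≤ L`, the ρ_TE-ball of radius `r` around any `X` has size
`1 + Σ_{k=1}^r Σ_{i=1}^k C(n,i)·C(k-1,i-1)·2^{k-i}`; in particular it does not
depend on the center `X`. -/
theorem stmt_9 (n L r : ℕ) (hn : 0 < n) (hL : 0 < L) (hr : 0 < r) (hrL : r ≤ L)
    (X : Fin n → Fin L → ZMod 2) :
    Nat.card {Y : Fin n → Fin L → ZMod 2 | rhoTE X Y ≤ r} =
      1 + ∑ k ∈ Finset.Icc 1 r, ∑ i ∈ Finset.Icc 1 k,
        n.choose i * (k - 1).choose (i - 1) * 2 ^ (k - i) :=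
  stmt_9_general n L r hrL X
end

section
/- The number of arrays Y ∈ F₂^{n×L} at ρ_TE-distance exactly k from a fixed X, for 1 ≤ k ≤ L, equals Σ_{i=1}^k C(n,i)·C(k-1,i-1)·2^{k-i}. -/
/-!
The distance enumerator `∑ Y, t ^ rhoTE X Y` factors over the rows into the row enumerators
`∑ y, t ^ rhoRow x y`. A row at distance `d ≥ 1` from `x` agrees with `x` before position
`L - d`, differs from it there and is free after it, so there are `2 ^ (d - 1)` of them, and up to
degree `L` every row enumerator is `1 + t / (1 - 2t)`. Expanding
`(1 + t / (1 - 2t)) ^ n = ∑ i, C(n, i) t ^ i (1 - 2t) ^ (-i)`, where `i` counts the rows in which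
`Y` differs from `X`, the coefficient of `t ^ k` is `∑ i, C(n, i) C(k - 1, i - 1) 2 ^ (k - i)`.
-/

open Finset PowerSeries

section Row

variable {L : ℕ} (x y : Fin L → ZMod 2)

lemma rhoRow_eq_zero_iff : rhoRow x y = 0 ↔ x = y := by
  unfold rhoRow
  split_ifs with h
  · simp [h]
  · rw [show ∀ j₀ : Fin L, L - j₀ = 0 ↔ False from
      fun j₀ => iff_false_intro (by have := j₀.isLt; omega)]
    exact iff_of_false id h

lemma rhoRow_eq_sub_iff (m : Fin L) :
    rhoRow x y = L - m ↔ x m ≠ y m ∧ ∀ j < m, x j = y j := by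
  unfold rhoRow
  split_ifs with h
  · subst h
    simp only [ne_eq, not_true_eq_false, false_and, iff_false]
    omega
  · rw [show ∀ j₀ : Fin L, L - j₀ = L - m ↔ j₀ = m by omega, min'_eq_iff]
    simp only [mem_filter, mem_univ, true_and]
    refine and_congr_right fun _ => forall_congr' fun j => ?_
    rw [← not_lt, not_imp_not]

lemma card_rhoRow_eq_sub (m : Fin L) : #{y | rhoRow x y = L - m} = 2 ^ (L - 1 - m) := by
  let t : Fin L → Finset (ZMod 2) := fun j =>
    if j < m then {x j} else if j = m then {x j}ᶜ else univ
  have ht : ∀ j, #(t j) = if m < j then 2 else 1 := by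
    intro j
    rcases lt_trichotomy j m with hj | rfl | hj
    · simp [t, hj, hj.not_gt]
    · simp [t, card_compl]
    · simp [t, hj, hj.not_gt, hj.ne']
  have hfilter : ({y | rhoRow x y = L - m} : Finset _) = Fintype.piFinset t := by
    ext y
    simp only [mem_filter, mem_univ, true_and, Fintype.mem_piFinset, rhoRow_eq_sub_iff]
    constructor
    · rintro ⟨hm, hlt⟩ j
      rcases lt_trichotomy j m with hj | rfl | hj
      · simp [t, hj, hlt j hj]
      · simp [t, Ne.symm hm]
      · simp [t, hj.not_gt, hj.ne']
    · intro hy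
      refine ⟨fun h => by simpa [t, h] using hy m, fun j hj => ?_⟩
      simpa [t, hj, eq_comm] using hy j
  rw [hfilter, Fintype.card_piFinset, prod_congr rfl fun j _ => ht j, prod_ite, prod_const,
    prod_const_one, mul_one, filter_lt_eq_Ioi, Fin.card_Ioi]

end Row

variable {R : Type*} [CommRing R]

lemma PowerSeries.coeff_sum_X_pow {α : Type*} [Fintype α] (f : α → ℕ) (d : ℕ) :
    coeff d (∑ a, (X : R⟦X⟧) ^ f a) = #{a | f a = d} := by
  simp [coeff_X_pow, eq_comm]

lemma Finset.sum_pow_sum_eq_prod_sum_pow {M : Type*} [CommSemiring M] {ι : Type*} [Fintype ι]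
    [DecidableEq ι] {κ : ι → Type*} [∀ i, Fintype (κ i)] (r : M) (f : ∀ i, κ i → ℕ) :
    ∑ Y : ∀ i, κ i, r ^ (∑ i, f i (Y i)) = ∏ i, ∑ a, r ^ f i a := by
  simp_rw [Fintype.prod_sum, prod_pow_eq_pow_sum]

lemma PowerSeries.trunc_prod_eq_trunc_pow {ι : Type*} (s : Finset ι) (f : ι → R⟦X⟧) (g : R⟦X⟧)
    (N : ℕ) (h : ∀ i ∈ s, trunc N (f i) = trunc N g) :
    trunc N (∏ i ∈ s, f i) = trunc N (g ^ #s) := by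
  classical
  induction s using Finset.induction_on with
  | empty => simp
  | insert a s ha ih =>
    rw [prod_insert ha, card_insert_of_notMem ha, pow_succ', ← trunc_trunc_mul_trunc,
      h a (mem_insert_self a s), ih fun i hi => h i (mem_insert_of_mem hi),
      trunc_trunc_mul_trunc]

/-- Up to degree `L`, the distance enumerator `∑ y, t ^ rhoRow x y` of a row is
`1 + t / (1 - 2t)`. -/
noncomputable def rhoRowSeries (R : Type*) [CommRing R] : R⟦X⟧ := 1 + X * rescale 2 (mk 1)

lemma coeff_rhoRowSeries (d : ℕ) :
    coeff d (rhoRowSeries R) = if d = 0 then 1 else 2 ^ (d - 1) := by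
  rcases d with _ | d <;> simp [rhoRowSeries, coeff_one, coeff_rescale]

lemma coeff_X_mul_rescale_two_pow {i : ℕ} (hi : 0 < i) (k : ℕ) :
    coeff k ((X * rescale 2 (mk 1) : R⟦X⟧) ^ i) =
      if i ≤ k then ((k - 1).choose (i - 1) * 2 ^ (k - i) : R) else 0 := by
  obtain ⟨i, rfl⟩ := Nat.exists_eq_add_of_lt hi
  rw [mul_pow, ← map_pow, mk_one_pow_eq_mk_choose_add, coeff_X_pow_mul']
  split_ifs with hik
  · rw [coeff_rescale, coeff_mk, mul_comm]
    congr 3; omega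
  · rfl

lemma coeff_rhoRowSeries_pow {k : ℕ} (hk : 1 ≤ k) (n : ℕ) :
    coeff k (rhoRowSeries R ^ n) =
      ∑ i ∈ Icc 1 k, (n.choose i * (k - 1).choose (i - 1) * 2 ^ (k - i) : R) := by
  set F : ℕ → R := fun i => n.choose i * coeff k ((X * rescale 2 (mk 1) : R⟦X⟧) ^ i)
  have hF : ∀ i ∈ Icc 1 k, F i = n.choose i * (k - 1).choose (i - 1) * 2 ^ (k - i) := by
    intro i hi
    rw [mem_Icc] at hi
    simp only [F, coeff_X_mul_rescale_two_pow hi.1, if_pos hi.2, mul_assoc]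
  have hF_zero : ∀ i ∉ Icc 1 k ∩ range (n + 1), F i = 0 := by
    intro i hi
    simp only [mem_inter, mem_Icc, mem_range, not_and_or, not_le, not_lt] at hi
    rcases hi with (hi | hi) | hi
    · simp [F, Nat.lt_one_iff.mp hi, coeff_one, Nat.one_le_iff_ne_zero.mp hk]
    · simp [F, coeff_X_mul_rescale_two_pow (by omega : 0 < i), hi.not_ge]
    · simp [F, Nat.choose_eq_zero_of_lt (by omega : n < i)]
  rw [rhoRowSeries, add_comm, add_pow, ← sum_congr rfl hF]
  simp only [one_pow, mul_one, ← nsmul_eq_mul', map_sum, map_nsmul]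
  simp only [nsmul_eq_mul]
  rw [← sum_subset inter_subset_right fun i _ hi => hF_zero i hi,
    sum_subset inter_subset_left fun i _ hi => hF_zero i hi]

lemma trunc_sum_X_pow_rhoRow {L : ℕ} (x : Fin L → ZMod 2) :
    trunc (L + 1) (∑ y, (X : R⟦X⟧) ^ rhoRow x y) = trunc (L + 1) (rhoRowSeries R) := by
  ext d
  simp only [coeff_trunc]
  split_ifs with hd
  · rw [coeff_sum_X_pow, coeff_rhoRowSeries]
    split_ifs with hd0
    · simp [hd0, rhoRow_eq_zero_iff, filter_eq]
    · have hm : L - d < L := by omega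
      rw [show d = L - (⟨L - d, hm⟩ : Fin L) by simp; omega, card_rhoRow_eq_sub]
      push_cast
      congr 1
      omega
  · rfl

lemma coeff_prod_sum_X_pow_rhoRow {ι : Type*} (s : Finset ι) {L : ℕ} (x : ι → Fin L → ZMod 2)
    {k : ℕ} (hkL : k ≤ L) :
    coeff k (∏ i ∈ s, ∑ y, (X : R⟦X⟧) ^ rhoRow (x i) y) = coeff k (rhoRowSeries R ^ #s) := by
  have h := congrArg (Polynomial.coeff · k) <|
    trunc_prod_eq_trunc_pow s _ _ (L + 1) fun i _ => trunc_sum_X_pow_rhoRow (R := R) (x i)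
  simpa only [coeff_trunc, if_pos (Nat.lt_succ_of_le hkL)] using h

theorem stmt_10_general (n L k : ℕ) (hk : 1 ≤ k) (hkL : k ≤ L)
    (X : Fin n → Fin L → ZMod 2) :
    Nat.card {Y : Fin n → Fin L → ZMod 2 | rhoTE X Y = k} =
      ∑ i ∈ Finset.Icc 1 k, n.choose i * (k - 1).choose (i - 1) * 2 ^ (k - i) := by
  have h : (Nat.card {Y : Fin n → Fin L → ZMod 2 | rhoTE X Y = k} : ℤ) =
      coeff k (∏ i, ∑ y, (PowerSeries.X : ℤ⟦X⟧) ^ rhoRow (X i) y) := by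
    rw [← sum_pow_sum_eq_prod_sum_pow, coeff_sum_X_pow, Nat.card_eq_card_toFinset,
      Set.toFinset_ofPred]
    rfl
  rw [coeff_prod_sum_X_pow_rhoRow univ X hkL, card_univ, Fintype.card_fin,
    coeff_rhoRowSeries_pow hk] at h
  exact_mod_cast h

/-- for `1 ≤ k ≤ L`, the number of arrays at ρ_TE-distance exactly `k`
from any fixed `X` equals `Σ_{i=1}^k C(n,i)·C(k-1,i-1)·2^{k-i}`. -/
theorem stmt_10 (n L k : ℕ) (hn : 0 < n) (hL : 0 < L) (hk : 1 ≤ k) (hkL : k ≤ L)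
    (X : Fin n → Fin L → ZMod 2) :
    Nat.card {Y : Fin n → Fin L → ZMod 2 | rhoTE X Y = k} =
      ∑ i ∈ Finset.Icc 1 k, n.choose i * (k - 1).choose (i - 1) * 2 ^ (k - i) :=
  stmt_10_general n L k hk hkL X
end

section
/- Any code C ⊆ F₂^{n×L} of size M with minimum ρ_TE-distance d satisfies the Singleton-type bound d ≤ nL - ⌈log₂ M⌉ + 1. -/
/-!
Read row by row, `rhoTE X Y` counts the positions lying at or after the first difference in
their row, so two arrays agreeing on a set `S` of positions that is closed under moving left in a
row are at distance at most `nL - |S|`. Taking for `S` the first `nL - d + 1` positions in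
row-major order, any two distinct codewords must differ on `S`; hence `M ≤ 2 ^ (nL - d + 1)`.
-/

open Finset

section TailErasure

variable {n L : ℕ}

theorem rhoRow_eq_card (x y : Fin L → ZMod 2) :
    rhoRow x y = #{i | ∃ k ≤ i, x k ≠ y k} := by
  unfold rhoRow
  split_ifs with h
  · simp [h]
  · generalize_proofs hne
    set m := (univ.filter fun j => x j ≠ y j).min' hne
    have hm : x m ≠ y m := by simpa using min'_mem _ hne
    have : ({i | ∃ k ≤ i, x k ≠ y k} : Finset (Fin L)) = Ici m := by
      ext i
      simp only [mem_filter, mem_univ, true_and, mem_Ici]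
      exact ⟨fun ⟨k, hki, hk⟩ => (min'_le _ k (by simpa using hk)).trans hki,
        fun hmi => ⟨m, hmi, hm⟩⟩
    rw [this, Fin.card_Ici]

theorem rhoTE_eq_card (X Y : Fin n → Fin L → ZMod 2) :
    rhoTE X Y = #{p : Fin n × Fin L | ∃ k ≤ p.2, X p.1 k ≠ Y p.1 k} := by
  simp only [rhoTE, rhoRow_eq_card, card_filter, Fintype.sum_prod_type]

theorem rhoTE_le (X Y : Fin n → Fin L → ZMod 2) : rhoTE X Y ≤ n * L := by
  rw [rhoTE_eq_card]
  exact (card_filter_le _ _).trans (by simp)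

theorem rhoTE_add_card_le {X Y : Fin n → Fin L → ZMod 2} {S : Finset (Fin n × Fin L)}
    (hS : ∀ j i k, (j, i) ∈ S → k ≤ i → (j, k) ∈ S) (hXY : ∀ p ∈ S, X p.1 p.2 = Y p.1 p.2) :
    rhoTE X Y + #S ≤ n * L := by
  have hdisj : Disjoint ({p | ∃ k ≤ p.2, X p.1 k ≠ Y p.1 k} : Finset (Fin n × Fin L)) S := by
    refine disjoint_left.mpr fun {p} hp hpS => ?_
    obtain ⟨j, i⟩ := p
    obtain ⟨k, hki, hk⟩ := (mem_filter.mp hp).2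
    exact hk (hXY (j, k) (hS j i k hpS hki))
  rw [rhoTE_eq_card, ← card_union_of_disjoint hdisj]
  exact (card_le_univ _).trans (by simp)

def rowMajorPrefix (n L c : ℕ) : Finset (Fin n × Fin L) :=
  {p | (finProdFinEquiv p : ℕ) < c}

theorem card_rowMajorPrefix (c : ℕ) : #(rowMajorPrefix n L c) = min (n * L) c := by
  rw [← Fin.card_filter_val_lt]
  exact card_equiv finProdFinEquiv (by simp [rowMajorPrefix])

theorem mem_rowMajorPrefix_of_le {c : ℕ} {j : Fin n} {i k : Fin L}
    (h : (j, i) ∈ rowMajorPrefix n L c) (hki : k ≤ i) : (j, k) ∈ rowMajorPrefix n L c := by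
  simp only [rowMajorPrefix, mem_filter, mem_univ, true_and, finProdFinEquiv_apply_val] at h ⊢
  have : (k : ℕ) ≤ i := hki
  omega

theorem injOn_restrict_of_le_rhoTE {d : ℕ} {C : Finset (Fin n → Fin L → ZMod 2)}
    {S : Finset (Fin n × Fin L)} (hS : ∀ j i k, (j, i) ∈ S → k ≤ i → (j, k) ∈ S)
    (hSd : n * L < #S + d) (hC : ∀ X ∈ C, ∀ Y ∈ C, X ≠ Y → d ≤ rhoTE X Y) :
    Set.InjOn (fun (X : Fin n → Fin L → ZMod 2) (p : S) => X p.1.1 p.1.2) C := by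
  intro X hX Y hY hXY
  by_contra hne
  have := rhoTE_add_card_le hS fun p hp => congrFun hXY ⟨p, hp⟩
  have := hC X hX Y hY hne
  omega

theorem card_le_two_pow_of_le_rhoTE {d : ℕ} {C : Finset (Fin n → Fin L → ZMod 2)}
    (hd : 0 < d) (hC : ∀ X ∈ C, ∀ Y ∈ C, X ≠ Y → d ≤ rhoTE X Y) :
    #C ≤ 2 ^ (n * L + 1 - d) := by
  have hS : #(rowMajorPrefix n L (n * L + 1 - d)) = n * L + 1 - d := by
    rw [card_rowMajorPrefix]; omega
  have hinj := injOn_restrict_of_le_rhoTE (S := rowMajorPrefix n L (n * L + 1 - d))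
    (fun _ _ _ => mem_rowMajorPrefix_of_le) (by omega) hC
  calc #C ≤ Fintype.card (rowMajorPrefix n L (n * L + 1 - d) → ZMod 2) :=
        card_le_card_of_injOn _ (fun _ _ => mem_univ _) hinj
    _ = 2 ^ (n * L + 1 - d) := by simp [hS]

end TailErasure

theorem stmt_13_general (n L : ℕ)
    (C : Finset (Fin n → Fin L → ZMod 2))
    (d : ℕ) (hd : d = sInf {k : ℕ | ∃ X ∈ C, ∃ Y ∈ C, X ≠ Y ∧ rhoTE X Y = k}) :
    d ≤ n * L - Nat.clog 2 C.card + 1 := by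
  rcases Nat.eq_zero_or_pos d with rfl | hd_pos
  · exact Nat.zero_le _
  have hd_le : d ≤ n * L := by
    have hne : {k : ℕ | ∃ X ∈ C, ∃ Y ∈ C, X ≠ Y ∧ rhoTE X Y = k}.Nonempty :=
      Set.nonempty_iff_ne_empty.mpr fun h => hd_pos.ne' (by simpa [h] using hd)
    obtain ⟨X, -, Y, -, -, hXY⟩ := hd ▸ Nat.sInf_mem hne
    exact hXY ▸ rhoTE_le X Y
  have hmin : ∀ X ∈ C, ∀ Y ∈ C, X ≠ Y → d ≤ rhoTE X Y := by
    intro X hX Y hY hne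
    rw [hd]
    exact Nat.sInf_le ⟨X, hX, Y, hY, hne, rfl⟩
  have := (Nat.clog_le_iff_le_pow one_lt_two).mpr (card_le_two_pow_of_le_rhoTE hd_pos hmin)
  omega

/-- Singleton-type bound: a code of size `M ≥ 2` with minimum
ρ_TE-distance `d` satisfies `d ≤ nL - ⌈log₂ M⌉ + 1`. -/
theorem stmt_13 (n L : ℕ) (hn : 0 < n) (hL : 0 < L)
    (C : Finset (Fin n → Fin L → ZMod 2)) (hM : 2 ≤ C.card)
    (d : ℕ) (hd : d = sInf {k : ℕ | ∃ X ∈ C, ∃ Y ∈ C, X ≠ Y ∧ rhoTE X Y = k}) :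
    d ≤ n * L - Nat.clog 2 C.card + 1 :=
  stmt_13_general n L C d hd
end

section
/- For any X ∈ F₂^{n×L} and positive integers t ≤ n, s ≤ L, the number of Y ∈ F₂^{n×L} with d_{s-DC}(X,Y) = t is at least C(n,t) · C(L,s)^t. -/
/-- The fixed-length Levenshtein distance between `x, y ∈ F₂^L`:
`L` minus the length of a longest common subsequence; equivalently the minimum `s`
such that `y` can be obtained from `x` by `s` deletions followed by `s` insertions. -/
noncomputable def dFLL {L : ℕ} (x y : Fin L → ZMod 2) : ℕ :=
  L - sSup {m : ℕ | ∃ w : List (ZMod 2),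
    w.length = m ∧ w.Sublist (List.ofFn x) ∧ w.Sublist (List.ofFn y)}

open Classical in
/-- `d_{s-DC}(X,Y)`: `∞` if some row-pair has fixed-length Levenshtein distance
exceeding `s`, and otherwise the number of rows in which `X` and `Y` differ. -/
noncomputable def dsDC {n L : ℕ} (s : ℕ) (X Y : Fin n → Fin L → ZMod 2) : ℕ∞ :=
  if ∃ i, s < dFLL (X i) (Y i) then ⊤
  else ((Finset.univ.filter fun i => X i ≠ Y i).card : ℕ∞)

/-!
Flipping the bits of `x` on an `s`-subset of positions gives `C(L,s)` distinct words at Hamming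
distance exactly `s` from `x`, and the fixed-length Levenshtein distance is at most the Hamming
distance, since the positions where two words agree spell a common subsequence. Choosing `t` rows
and one such flip in each row yields `C(n,t) · C(L,s)^t` distinct matrices at `d_{s-DC}`-distance
exactly `t`.
-/

open Finset

theorem dFLL_le_hammingDist {L : ℕ} (x y : Fin L → ZMod 2) : dFLL x y ≤ hammingDist x y := by
  set agree := (List.finRange L).filter fun j => x j = y j
  have hx : (agree.map x).Sublist (List.ofFn x) := by
    rw [List.ofFn_eq_map]
    exact List.filter_sublist.map x
  have hy : (agree.map x).Sublist (List.ofFn y) := by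
    rw [List.map_congr_left fun j hj => of_decide_eq_true (List.mem_filter.mp hj).2,
      List.ofFn_eq_map]
    exact List.filter_sublist.map y
  have hlen : (agree.map x).length = L - hammingDist x y := by
    have h : #{j | x j = y j} + hammingDist x y = L := by
      simpa [hammingDist] using card_filter_add_card_filter_not (s := univ) fun j => x j = y j
    rw [List.length_map, show agree.length = #{j | x j = y j} from rfl]
    omega
  have hbdd : BddAbove {m : ℕ | ∃ w : List (ZMod 2),
      w.length = m ∧ w.Sublist (List.ofFn x) ∧ w.Sublist (List.ofFn y)} :=
    ⟨L, fun m ⟨w, hw, hwx, _⟩ => by simpa [hw] using hwx.length_le⟩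
  have := le_csSup hbdd ⟨_, hlen, hx, hy⟩
  unfold dFLL
  omega

theorem dsDC_eq_hammingDist {n L s : ℕ} {X Y : Fin n → Fin L → ZMod 2}
    (h : ∀ i, hammingDist (X i) (Y i) ≤ s) : dsDC s X Y = hammingDist X Y := by
  have hrow : ∀ i, dFLL (X i) (Y i) ≤ s := fun i => (dFLL_le_hammingDist _ _).trans (h i)
  rw [dsDC, if_neg (by simpa using hrow), hammingDist]

theorem choose_le_card_hammingDist_eq {ι β : Type*} [Fintype ι] [DecidableEq ι] [Fintype β]
    [DecidableEq β] [AddGroup β] [Nontrivial β] (x : ι → β) (s : ℕ) :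
    (Fintype.card ι).choose s ≤ #{y | hammingDist x y = s} := by
  obtain ⟨c, hc⟩ := exists_ne (0 : β)
  let flip : Finset ι → ι → β := fun S => x + fun j => if j ∈ S then c else 0
  have hdist : ∀ S, hammingDist x (flip S) = #S := by
    intro S
    simp [flip, hammingDist, hc]
  rw [← card_univ, ← card_powersetCard]
  refine card_le_card_of_injOn flip
    (fun S hS => by simpa [hdist] using (mem_powersetCard.1 hS).2) ?_
  intro S _ T _ hST
  ext j
  have := congrFun hST j
  by_cases hS : j ∈ S <;> by_cases hT : j ∈ T <;> simp_all [flip]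

section Counting

variable {ι α : Type*} [Fintype ι] [DecidableEq ι] [DecidableEq α]

theorem filter_ne_eq_of_mem_piFinset_ite {X Y : ι → α} {N : ι → Finset α}
    (hX : ∀ i, X i ∉ N i) {T : Finset ι}
    (hY : Y ∈ Fintype.piFinset fun i => if i ∈ T then N i else {X i}) :
    ({i | X i ≠ Y i} : Finset ι) = T := by
  ext i
  have hYi := Fintype.mem_piFinset.1 hY i
  by_cases hi : i ∈ T
  · simp only [hi, if_true] at hYi
    simpa [hi] using fun h : X i = Y i => hX i (h ▸ hYi)
  · simp_all

theorem choose_mul_pow_le_card_hammingDist_eq (X : ι → α) (N : ι → Finset α)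
    (hX : ∀ i, X i ∉ N i) {m : ℕ} (hN : ∀ i, m ≤ #(N i)) (t : ℕ) :
    (Fintype.card ι).choose t * m ^ t ≤
      #{Y ∈ Fintype.piFinset (fun i => insert (X i) (N i)) | hammingDist X Y = t} := by
  let F : Finset ι → Finset (ι → α) := fun T =>
    Fintype.piFinset fun i => if i ∈ T then N i else {X i}
  have hdisj : (powersetCard t (univ : Finset ι) : Set (Finset ι)).PairwiseDisjoint F := by
    intro T _ T' _ hTT'
    refine disjoint_left.2 fun Y hY hY' => hTT' ?_
    rw [← filter_ne_eq_of_mem_piFinset_ite hX hY, filter_ne_eq_of_mem_piFinset_ite hX hY']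
  have hsub : (powersetCard t univ).biUnion F ⊆
      {Y ∈ Fintype.piFinset (fun i => insert (X i) (N i)) | hammingDist X Y = t} := by
    intro Y hY
    obtain ⟨T, hT, hYT⟩ := mem_biUnion.1 hY
    refine mem_filter.2 ⟨Fintype.mem_piFinset.2 fun i => ?_, ?_⟩
    · have := Fintype.mem_piFinset.1 hYT i
      split_ifs at this <;> simp_all
    · rw [hammingDist, filter_ne_eq_of_mem_piFinset_ite hX hYT, (mem_powersetCard.1 hT).2]
  have hcard : ∀ T ∈ powersetCard t univ, m ^ t ≤ #(F T) := by
    intro T hT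
    calc m ^ t = ∏ i, if i ∈ T then m else 1 := by
          rw [prod_ite_mem, univ_inter, prod_const, (mem_powersetCard.1 hT).2]
      _ ≤ ∏ i, #(if i ∈ T then N i else {X i}) :=
          prod_le_prod' fun i _ => by split_ifs <;> simp [hN]
      _ = #(F T) := (Fintype.card_piFinset _).symm
  calc (Fintype.card ι).choose t * m ^ t = ∑ _ ∈ powersetCard t univ, m ^ t := by
        rw [sum_const, card_powersetCard, card_univ, smul_eq_mul]
    _ ≤ ∑ T ∈ powersetCard t univ, #(F T) := sum_le_sum hcard
    _ = #((powersetCard t univ).biUnion F) := (card_biUnion hdisj).symm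
    _ ≤ _ := card_le_card hsub

end Counting

theorem stmt_17_general (n L t s : ℕ) (hs : 0 < s)
    (X : Fin n → Fin L → ZMod 2) :
    n.choose t * L.choose s ^ t ≤
      Nat.card {Y : Fin n → Fin L → ZMod 2 | dsDC s X Y = (t : ℕ∞)} := by
  let sphere : (Fin L → ZMod 2) → Finset (Fin L → ZMod 2) := fun x =>
    {y | hammingDist x y = s}
  have hcount := choose_mul_pow_le_card_hammingDist_eq X (fun i => sphere (X i))
    (fun i => by simp [sphere, hs.ne])
    (fun i => by simpa using choose_le_card_hammingDist_eq (X i) s) t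
  rw [Fintype.card_fin] at hcount
  refine hcount.trans ?_
  rw [← Nat.card_eq_finsetCard]
  refine Nat.card_mono (Set.toFinite _) fun Y hY => ?_
  obtain ⟨hYrows, hYt⟩ := mem_filter.1 hY
  have hrows : ∀ i, hammingDist (X i) (Y i) ≤ s := fun i => by
    rcases mem_insert.1 (Fintype.mem_piFinset.1 hYrows i) with h | h
    · simp [h]
    · exact (mem_filter.1 h).2.le
  simp [dsDC_eq_hammingDist hrows, hYt]

/-- for any `X ∈ F₂^{n×L}` and `t ≤ n`, `s ≤ L`, the number of `Y` with
`d_{s-DC}(X,Y) = t` is at least `C(n,t) · C(L,s)^t`. -/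
theorem stmt_17 (n L t s : ℕ) (ht : 0 < t) (htn : t ≤ n) (hs : 0 < s) (hsL : s ≤ L)
    (X : Fin n → Fin L → ZMod 2) :
    n.choose t * L.choose s ^ t ≤
      Nat.card {Y : Fin n → Fin L → ZMod 2 | dsDC s X Y = (t : ℕ∞)} :=
  stmt_17_general n L t s hs X
end

section
/- If C ⊆ F₂^{n×L} is a (t,1)-deletion-correcting code, then for all distinct X, Y ∈ C, d¹_DC(X,Y) > t, where d¹_DC(X,Y) = ∞ if some rows of X and Y differ in a coordinate other than the first, and otherwise equals the number of rows differing (necessarily only in the first coordinate). Consequently, |C| · Σ_{i=0}^{⌊t/2⌋} C(n,i) ≤ 2^{nL}. -/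
/-- `W` is a possible output of the array `X` through the `(t,s)`-deletion channel:
each row of `W` is a subsequence of the corresponding row of `X` obtained by at most
`s` deletions, and at most `t` rows are shortened. -/
def IsDelOutput (n L t s : ℕ) (X : Fin n → Fin L → ZMod 2)
    (W : Fin n → List (ZMod 2)) : Prop :=
  (∀ i, (W i).Sublist (List.ofFn (X i))) ∧
  (∀ i, L - s ≤ (W i).length) ∧
  (Finset.univ.filter fun i => (W i).length < L).card ≤ t

/-- `C` is a `(t,s)`-deletion-correcting code: no two distinct codewords can produce
the same output under `(t,s)`-deletion patterns. -/
def IsDCCode (n L t s : ℕ) (C : Set (Fin n → Fin L → ZMod 2)) : Prop :=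
  ∀ X ∈ C, ∀ Y ∈ C, ∀ W : Fin n → List (ZMod 2),
    IsDelOutput n L t s X W → IsDelOutput n L t s Y W → X = Y

/-- `d¹(x,y)`: `∞` if `x` and `y` differ in a coordinate other than the first;
`1` if they differ exactly in the first coordinate; `0` if they are equal. -/
def dOne {L : ℕ} (x y : Fin L → ZMod 2) : ℕ∞ :=
  if ∃ j : Fin L, 1 ≤ (j : ℕ) ∧ x j ≠ y j then ⊤
  else if x = y then 0 else 1

/-- `d¹_DC(X,Y)`: `∞` if some row-pair has `d¹ = ∞`, else the number of rows in which
`X` and `Y` differ (necessarily only in the first coordinate). -/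
def dOneDC {n L : ℕ} (X Y : Fin n → Fin L → ZMod 2) : ℕ∞ :=
  if ∃ i, dOne (X i) (Y i) = ⊤ then ⊤
  else ((Finset.univ.filter fun i => X i ≠ Y i).card : ℕ∞)

/-! If `d¹_DC(X, Y) ≤ t`, then `X` and `Y` agree outside the first column and differ in at most
`t` rows; deleting the first symbol of exactly those rows is a common output of the
`(t,1)`-deletion channel for both, so in a deletion-correcting code `X = Y`.

For the bound, flipping the first symbol in a set `S` of at most `⌊t/2⌋` rows injects
`C × {S | #S ≤ ⌊t/2⌋}` into all arrays: if `X + firstColumnFlip S = Y + firstColumnFlip S'`, then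
`X` and `Y` differ only in the first column of the rows of `S ∪ S'`, hence are within distance `t`, hence equal. -/

open Finset

section DeletionDistance

variable {n L : ℕ}

lemma dOne_eq_top_iff {x y : Fin L → ZMod 2} :
    dOne x y = ⊤ ↔ ∃ j : Fin L, 1 ≤ (j : ℕ) ∧ x j ≠ y j := by
  unfold dOne
  split_ifs <;> simp_all

lemma dOneDC_le_iff {X Y : Fin n → Fin L → ZMod 2} {r : ℕ} :
    dOneDC X Y ≤ r ↔
      (∀ i (j : Fin L), 1 ≤ (j : ℕ) → X i j = Y i j) ∧ #{i | X i ≠ Y i} ≤ r := by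
  unfold dOneDC
  simp only [dOne_eq_top_iff]
  split_ifs with h
  · obtain ⟨i, j, hj, hne⟩ := h
    simp only [top_le_iff, ENat.natCast_ne_top, false_iff, not_and]
    exact fun hagree => absurd (hagree i j hj) hne
  · push Not at h
    rw [Nat.cast_le]
    exact ⟨fun hcard => ⟨h, hcard⟩, And.right⟩

end DeletionDistance

section CommonOutput

variable {n L t : ℕ}

lemma List.tail_ofFn_eq_tail_ofFn {α : Type*} {x y : Fin L → α}
    (h : ∀ j : Fin L, 1 ≤ (j : ℕ) → x j = y j) :
    (List.ofFn x).tail = (List.ofFn y).tail :=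
  List.ext_getElem (by simp) fun k _ _ => by simpa using h ⟨k + 1, by simp at *; omega⟩ (by simp)

def commonOutput (X Y : Fin n → Fin L → ZMod 2) : Fin n → List (ZMod 2) :=
  fun i => if X i = Y i then List.ofFn (X i) else (List.ofFn (X i)).tail

lemma commonOutput_comm {X Y : Fin n → Fin L → ZMod 2}
    (h : ∀ i (j : Fin L), 1 ≤ (j : ℕ) → X i j = Y i j) :
    commonOutput X Y = commonOutput Y X := by
  funext i
  unfold commonOutput
  by_cases hi : X i = Y i
  · simp [hi]
  · simp only [hi, Ne.symm hi, if_false]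
    exact List.tail_ofFn_eq_tail_ofFn (h i)

lemma isDelOutput_commonOutput {X Y : Fin n → Fin L → ZMod 2}
    (hcard : #{i | X i ≠ Y i} ≤ t) : IsDelOutput n L t 1 X (commonOutput X Y) := by
  refine ⟨fun i => ?_, fun i => ?_, le_trans (card_le_card fun i => ?_) hcard⟩
  · unfold commonOutput
    split_ifs
    exacts [List.Sublist.refl _, List.tail_sublist _]
  · unfold commonOutput
    split_ifs <;> simp
  · simp only [mem_filter, mem_univ, true_and]
    intro hlen hi
    simp [commonOutput, hi] at hlen

lemma IsDCCode.eq_of_dOneDC_le {C : Set (Fin n → Fin L → ZMod 2)} (hC : IsDCCode n L t 1 C)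
    {X Y : Fin n → Fin L → ZMod 2} (hX : X ∈ C) (hY : Y ∈ C) (h : dOneDC X Y ≤ t) :
    X = Y := by
  obtain ⟨hagree, hcard⟩ := dOneDC_le_iff.mp h
  refine hC X hX Y hY _ (isDelOutput_commonOutput hcard) ?_
  rw [commonOutput_comm hagree]
  refine isDelOutput_commonOutput (le_of_eq_of_le ?_ hcard)
  simp only [ne_comm]

end CommonOutput

lemma Finset.card_filter_card_le_eq_sum_choose {α : Type*} [Fintype α] (r : ℕ) :
    #{S : Finset α | #S ≤ r} = ∑ i ∈ range (r + 1), (Fintype.card α).choose i := by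
  rw [card_eq_sum_card_fiberwise (f := card) (t := range (r + 1))
    fun S hS => by simpa [Nat.lt_succ_iff] using hS]
  refine sum_congr rfl fun i hi => ?_
  rw [← card_univ, ← card_powersetCard, powersetCard_eq_filter, filter_filter]
  congr 1
  ext S
  simp only [mem_range] at hi
  simp only [mem_filter, mem_univ, mem_powerset, subset_univ, true_and]
  constructor
  · exact And.right
  · rintro rfl
    exact ⟨by omega, rfl⟩

section FirstColumnFlip

variable {n L : ℕ}

def firstColumnFlip (S : Finset (Fin n)) : Fin n → Fin L → ZMod 2 :=
  fun i j => if i ∈ S ∧ (j : ℕ) = 0 then 1 else 0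

lemma firstColumnFlip_injective (hL : 0 < L) :
    Function.Injective (firstColumnFlip (n := n) (L := L)) := by
  intro S S' h
  ext i
  have := congrFun (congrFun h i) ⟨0, hL⟩
  by_cases hi : i ∈ S <;> by_cases hi' : i ∈ S' <;> simp_all [firstColumnFlip]

lemma dOneDC_le_of_add_firstColumnFlip_eq {X Y : Fin n → Fin L → ZMod 2}
    {S S' : Finset (Fin n)} (h : X + firstColumnFlip S = Y + firstColumnFlip S') :
    dOneDC X Y ≤ (#S + #S' : ℕ) := by
  have hentry i j : X i j + firstColumnFlip S i j = Y i j + firstColumnFlip S' i j :=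
    congrFun (congrFun h i) j
  refine dOneDC_le_iff.mpr ⟨fun i j hj => ?_, ?_⟩
  · simpa [firstColumnFlip, Nat.one_le_iff_ne_zero.mp hj] using hentry i j
  · refine (card_le_card fun i hi => ?_).trans (card_union_le S S')
    simp only [mem_filter, mem_univ, true_and, mem_union] at hi ⊢
    by_contra! hout
    refine hi (funext fun j => ?_)
    simpa [firstColumnFlip, hout.1, hout.2] using hentry i j

theorem card_mul_sum_choose_le (hL : 0 < L) {r : ℕ} {C : Finset (Fin n → Fin L → ZMod 2)}
    (hC : ∀ X ∈ C, ∀ Y ∈ C, dOneDC X Y ≤ (2 * r : ℕ) → X = Y) :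
    #C * ∑ i ∈ range (r + 1), n.choose i ≤ 2 ^ (n * L) := by
  set balls : Finset (Finset (Fin n)) := {S | #S ≤ r} with hballs
  have hinj : Set.InjOn (fun p : (Fin n → Fin L → ZMod 2) × Finset (Fin n) =>
      p.1 + firstColumnFlip p.2) ↑(C ×ˢ balls) := by
    rintro ⟨X, S⟩ hXS ⟨Y, S'⟩ hYS' h
    simp only [hballs, coe_product, Set.mem_prod, mem_coe, mem_filter, mem_univ, true_and]
      at hXS hYS' h
    have hXY : X = Y := hC X hXS.1 Y hYS'.1
      ((dOneDC_le_of_add_firstColumnFlip_eq h).trans (by gcongr; omega))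
    subst hXY
    simp [firstColumnFlip_injective hL (add_left_cancel h)]
  calc #C * ∑ i ∈ range (r + 1), n.choose i
      = #(C ×ˢ balls) := by
        rw [card_product, card_filter_card_le_eq_sum_choose, Fintype.card_fin]
    _ ≤ Fintype.card (Fin n → Fin L → ZMod 2) :=
        card_le_card_of_injOn _ (fun _ _ => mem_univ _) hinj
    _ = 2 ^ (n * L) := by simp [ZMod.card, ← pow_mul, mul_comm]

end FirstColumnFlip

theorem stmt_18_general (n L t : ℕ) (hL : 0 < L)
    (C : Finset (Fin n → Fin L → ZMod 2)) (hC : IsDCCode n L t 1 ↑C) :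
    (∀ X ∈ C, ∀ Y ∈ C, X ≠ Y → (t : ℕ∞) < dOneDC X Y) ∧
    C.card * (∑ i ∈ Finset.range (t / 2 + 1), n.choose i) ≤ 2 ^ (n * L) := by
  have hsep : ∀ X ∈ C, ∀ Y ∈ C, dOneDC X Y ≤ t → X = Y :=
    fun X hX Y hY => hC.eq_of_dOneDC_le hX hY
  refine ⟨fun X hX Y hY hXY => lt_of_not_ge fun h => hXY (hsep X hX Y hY h), ?_⟩
  exact card_mul_sum_choose_le hL fun X hX Y hY h =>
    hsep X hX Y hY (h.trans (by exact_mod_cast Nat.mul_div_le t 2))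

/-- if `C` is a `(t,1)`-deletion-correcting code then all distinct
codewords have `d¹_DC` distance greater than `t`, and consequently
`|C| · Σ_{i=0}^{⌊t/2⌋} C(n,i) ≤ 2^{nL}`. -/
theorem stmt_18 (n L t : ℕ) (ht : 0 < t) (htn : t ≤ n) (hL : 0 < L)
    (C : Finset (Fin n → Fin L → ZMod 2)) (hC : IsDCCode n L t 1 ↑C) :
    (∀ X ∈ C, ∀ Y ∈ C, X ≠ Y → (t : ℕ∞) < dOneDC X Y) ∧
    C.card * (∑ i ∈ Finset.range (t / 2 + 1), n.choose i) ≤ 2 ^ (n * L) :=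
  stmt_18_general n L t hL C hC
end

section
/- Let C ⊆ F₂^{n×L} be a (1,1,1)-TED code (correcting one tail-erasure in one row and one arbitrary deletion in another row, or any sub-pattern thereof). For X ∈ C define D^{↑↓}_i(X) as the set of arrays obtained by deleting any one bit of row i of X and appending an arbitrary bit at the end of that row, and D(X) = ∪_{i=1}^n D^{↑↓}_i(X). Then for all distinct X, Y ∈ C, D(X) ∩ D(Y) = ∅; moreover |D^{↑↓}_i(X)| = 2·r(x_i), where r(x_i) is the number of runs of row i, so |D(X)| ≤ 2·Σ_i r(x_i). -/
/-!
If `Z` lies in both `D^{↑↓}_i(X)` and `D^{↑↓}_j(Y)`, erase the last bit of rows `i` and `j`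
of `Z`. Viewed from `X`, row `i` loses exactly its appended bit, leaving a one-deletion of
`x_i`, and row `j` (if `j ≠ i`) suffers a tail-erasure; so the result is a `(1,1,1)`-TED
output of `X`, and likewise of `Y`, forcing `X = Y`.

An array of `D^{↑↓}_i(X)` is determined by its row `i`, a one-deletion of `x_i` followed by
a free bit. Deleting any bit of the same run gives the same word, and deletions from
different runs give different words, so `x_i` has exactly `r(x_i)` one-deletions.
-/

/-- The number of runs (maximal blocks of equal consecutive symbols) of `x ∈ F₂^L`. -/
def runs {L : ℕ} (x : Fin L → ZMod 2) : ℕ :=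
  ((List.ofFn x).destutter (· ≠ ·)).length

/-- `D^{↑↓}_i(X)`: the set of arrays obtained from `X` by deleting any one bit of row
`i` and appending an arbitrary bit at the end of that row (all other rows unchanged). -/
def DudSet (n L : ℕ) (X : Fin n → Fin L → ZMod 2) (i : Fin n) :
    Set (Fin n → Fin L → ZMod 2) :=
  {Z | (∀ i', i' ≠ i → Z i' = X i') ∧
    ∃ (w : List (ZMod 2)) (b : ZMod 2),
      w.Sublist (List.ofFn (X i)) ∧ w.length + 1 = L ∧ List.ofFn (Z i) = w ++ [b]}

/-- `W` is a possible output of `X` through the `(1,1,1)`-TED channel: at most one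
arbitrary single-bit deletion in one row (`a`), together with at most one tail-erasure
(truncation of the last bit) in another (or the same) row (`e`). -/
def IsTEDOutput (n L : ℕ) (X : Fin n → Fin L → ZMod 2)
    (W : Fin n → List (ZMod 2)) : Prop :=
  ∃ a e : Fin n → ℕ, (∑ i, a i) ≤ 1 ∧ (∑ i, e i) ≤ 1 ∧
    ∀ i, (W i).Sublist ((List.ofFn (X i)).take (L - e i)) ∧
      (W i).length = L - e i - a i

/-- `C` is a `(1,1,1)`-TED code: no two distinct codewords admit `(1,1,1)`-TED
patterns producing identical outputs. -/
def IsTEDCode (n L : ℕ) (C : Set (Fin n → Fin L → ZMod 2)) : Prop :=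
  ∀ X ∈ C, ∀ Y ∈ C, ∀ W : Fin n → List (ZMod 2),
    IsTEDOutput n L X W → IsTEDOutput n L Y W → X = Y

namespace List

variable {α : Type*} [DecidableEq α]

def oneDeletions (l : List α) : Finset (List α) :=
  (l.sublists.filter (·.length + 1 = l.length)).toFinset

theorem mem_oneDeletions {l w : List α} :
    w ∈ oneDeletions l ↔ w.Sublist l ∧ w.length + 1 = l.length := by
  simp [oneDeletions, mem_sublists]

@[simp]
theorem oneDeletions_nil : oneDeletions ([] : List α) = ∅ := by
  ext w
  simp [mem_oneDeletions]

theorem oneDeletions_cons (a : α) (l : List α) :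
    oneDeletions (a :: l) = insert l ((oneDeletions l).image (a :: ·)) := by
  ext w
  simp only [mem_oneDeletions, Finset.mem_insert, Finset.mem_image, length_cons,
    Nat.add_right_cancel_iff]
  constructor
  · rintro ⟨hw, hlen⟩
    rcases sublist_cons_iff.1 hw with hw | ⟨r, rfl, hr⟩
    · exact .inl (hw.eq_of_length hlen)
    · exact .inr ⟨r, ⟨hr, by simpa using hlen⟩, rfl⟩
  · rintro (rfl | ⟨r, ⟨hr, hlen⟩, rfl⟩)
    · exact ⟨sublist_cons_self a w, rfl⟩
    · exact ⟨hr.cons_cons a, by simpa using hlen⟩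

theorem card_oneDeletions_cons (a : α) (l : List α) :
    (oneDeletions (a :: l)).card = (l.destutter' (· ≠ ·) a).length := by
  induction l generalizing a with
  | nil => simp [oneDeletions_cons]
  | cons b l ih =>
    have hcard : ((oneDeletions (b :: l)).image (a :: ·)).card = (oneDeletions (b :: l)).card :=
      Finset.card_image_of_injective _ (cons_injective (a := a))
    rw [oneDeletions_cons, destutter'_cons]
    by_cases hab : a = b
    · subst hab
      have hmem : a :: l ∈ (oneDeletions (a :: l)).image (a :: ·) :=
        Finset.mem_image_of_mem _ (by simp [oneDeletions_cons])
      simp [Finset.insert_eq_of_mem hmem, hcard, ih]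
    · have hmem : b :: l ∉ (oneDeletions (b :: l)).image (a :: ·) := by
        simp [hab]
      simp [Finset.card_insert_of_notMem hmem, hcard, ih, hab]

theorem card_oneDeletions (l : List α) :
    (oneDeletions l).card = (l.destutter (· ≠ ·)).length := by
  cases l with
  | nil => simp
  | cons a l => rw [card_oneDeletions_cons, destutter_cons']

section Fintype

variable [Fintype α]

def deletionsAppend (l : List α) : Finset (List α) :=
  (oneDeletions l ×ˢ Finset.univ).image fun p => p.1 ++ [p.2]

theorem mem_deletionsAppend {l v : List α} :
    v ∈ deletionsAppend l ↔
      ∃ w b, w.Sublist l ∧ w.length + 1 = l.length ∧ w ++ [b] = v := by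
  simp [deletionsAppend, mem_oneDeletions, and_assoc]

theorem card_deletionsAppend (l : List α) :
    (deletionsAppend l).card = Fintype.card α * (l.destutter (· ≠ ·)).length := by
  rw [deletionsAppend, Finset.card_image_of_injective, Finset.card_product, Finset.card_univ,
    card_oneDeletions, mul_comm]
  rintro ⟨w, b⟩ ⟨w', b'⟩ h
  obtain ⟨rfl, h⟩ := append_inj' h rfl
  simp_all

end Fintype

end List

theorem exists_ofFn_eq {α : Type*} {L : ℕ} {v : List α} (hv : v.length = L) :
    ∃ f : Fin L → α, List.ofFn f = v := by
  subst hv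
  exact ⟨_, List.ofFn_getElem⟩

section DudSet

variable {n L : ℕ} {X : Fin n → Fin L → ZMod 2} {i : Fin n}

theorem injOn_ofFn_row_dudSet : Set.InjOn (fun Z => List.ofFn (Z i)) (DudSet n L X i) := by
  intro Z hZ Z' hZ' h
  funext k
  by_cases hk : k = i
  · subst hk
    exact List.ofFn_injective h
  · rw [hZ.1 k hk, hZ'.1 k hk]

theorem image_ofFn_row_dudSet :
    (fun Z => List.ofFn (Z i)) '' DudSet n L X i = (List.ofFn (X i)).deletionsAppend := by
  ext v
  simp only [Set.mem_image, Finset.mem_coe, List.mem_deletionsAppend, List.length_ofFn]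
  constructor
  · rintro ⟨Z, ⟨-, w, b, hw, hlen, hZ⟩, rfl⟩
    exact ⟨w, b, hw, hlen, hZ.symm⟩
  · rintro ⟨w, b, hw, hlen, rfl⟩
    obtain ⟨f, hf⟩ := exists_ofFn_eq (v := w ++ [b]) (by simpa using hlen)
    refine ⟨Function.update X i f,
      ⟨fun k hk => Function.update_of_ne hk _ _, w, b, hw, hlen, ?_⟩, ?_⟩ <;> simpa using hf

theorem card_dudSet (X : Fin n → Fin L → ZMod 2) (i : Fin n) :
    Nat.card (DudSet n L X i) = 2 * runs (X i) := by
  rw [Nat.card_coe_set_eq, ← injOn_ofFn_row_dudSet.ncard_image, image_ofFn_row_dudSet,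
    Set.ncard_coe_finset, List.card_deletionsAppend, ZMod.card, runs]

end DudSet

def tailErased {α : Type*} {n L : ℕ} (Z : Fin n → Fin L → α) (S : Finset (Fin n)) :
    Fin n → List α :=
  fun k => if k ∈ S then (List.ofFn (Z k)).dropLast else List.ofFn (Z k)

theorem isTEDOutput_tailErased_of_mem_dudSet {n L : ℕ} {X Z : Fin n → Fin L → ZMod 2}
    {i : Fin n} (hZ : Z ∈ DudSet n L X i) (j : Fin n) :
    IsTEDOutput n L X (tailErased Z {i, j}) := by
  obtain ⟨hrows, w, b, hw, hlen, hZi⟩ := hZ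
  refine ⟨fun k => if k = i then 1 else 0, fun k => if k = j ∧ j ≠ i then 1 else 0,
    by simp, by by_cases hji : j = i <;> simp [hji], fun k => ?_⟩
  by_cases hki : k = i
  · subst hki
    have hj : ¬(k = j ∧ j ≠ k) := fun h => h.2 h.1.symm
    simp only [tailErased, Finset.mem_insert_self, if_true, hZi, List.dropLast_concat, hj,
      if_false, Nat.sub_zero]
    exact ⟨by rwa [List.take_of_length_le (by simp)], by omega⟩
  · by_cases hkj : k = j
    · subst hkj
      simp [tailErased, hki, hrows k hki, List.dropLast_eq_take]
    · simp [tailErased, hki, hkj, hrows k hki, List.take_of_length_le]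

theorem eq_of_mem_dudSet_of_mem_dudSet {n L : ℕ} {C : Set (Fin n → Fin L → ZMod 2)}
    (hC : IsTEDCode n L C) {X Y Z : Fin n → Fin L → ZMod 2} (hX : X ∈ C) (hY : Y ∈ C)
    {i j : Fin n} (hZX : Z ∈ DudSet n L X i) (hZY : Z ∈ DudSet n L Y j) : X = Y :=
  hC X hX Y hY _ (isTEDOutput_tailErased_of_mem_dudSet hZX j)
    (Finset.pair_comm i j ▸ isTEDOutput_tailErased_of_mem_dudSet hZY i)

theorem stmt_19_general (n L : ℕ)
    (C : Set (Fin n → Fin L → ZMod 2)) (hC : IsTEDCode n L C) :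
    (∀ X ∈ C, ∀ Y ∈ C, X ≠ Y →
      (⋃ i, DudSet n L X i) ∩ (⋃ i, DudSet n L Y i) = ∅) ∧
    (∀ (X : Fin n → Fin L → ZMod 2) (i : Fin n),
      Nat.card (DudSet n L X i) = 2 * runs (X i)) ∧
    (∀ X : Fin n → Fin L → ZMod 2,
      Nat.card (⋃ i, DudSet n L X i) ≤ 2 * ∑ i, runs (X i)) := by
  refine ⟨fun X hX Y hY hXY => ?_, card_dudSet, fun X => ?_⟩
  · refine Set.eq_empty_iff_forall_notMem.2 fun Z ⟨hZX, hZY⟩ => hXY ?_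
    obtain ⟨i, hi⟩ := Set.mem_iUnion.1 hZX
    obtain ⟨j, hj⟩ := Set.mem_iUnion.1 hZY
    exact eq_of_mem_dudSet_of_mem_dudSet hC hX hY hi hj
  · calc Nat.card (⋃ i, DudSet n L X i)
        ≤ ∑ i, (DudSet n L X i).ncard := Set.ncard_iUnion_le_of_fintype _
      _ = 2 * ∑ i, runs (X i) := by
        simp only [← Nat.card_coe_set_eq, card_dudSet, Finset.mul_sum]

/-- for a `(1,1,1)`-TED code, the sets `D(X) = ⋃_i D^{↑↓}_i(X)` are
pairwise disjoint over codewords; moreover `|D^{↑↓}_i(X)| = 2·r(x_i)` (twice the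
number of runs of row `i`), so `|D(X)| ≤ 2·Σ_i r(x_i)`. -/
theorem stmt_19 (n L : ℕ) (hn : 0 < n) (hL : 2 ≤ L)
    (C : Set (Fin n → Fin L → ZMod 2)) (hC : IsTEDCode n L C) :
    (∀ X ∈ C, ∀ Y ∈ C, X ≠ Y →
      (⋃ i, DudSet n L X i) ∩ (⋃ i, DudSet n L Y i) = ∅) ∧
    (∀ (X : Fin n → Fin L → ZMod 2) (i : Fin n),
      Nat.card (DudSet n L X i) = 2 * runs (X i)) ∧
    (∀ X : Fin n → Fin L → ZMod 2,
      Nat.card (⋃ i, DudSet n L X i) ≤ 2 * ∑ i, runs (X i)) :=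
  stmt_19_general n L C hC
end
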